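/- arXiv:1509.04135 — 8 statements merged into one kernel-verified Lean document; each statement's English description precedes it below -/
import Mathlib

section
/- If ρ > μI, then j has exactly one positive root: there exists a unique r0 > 0 such that j(r0) = 0. (Indeed j(0) = μI − ρ < 0, j is continuous and strictly convex, and j(r) → +∞ as r → +∞.) -/
/-!
`j` is a quadratic with positive leading coefficient plus nonnegative multiples of exponentials
`r ↦ b ^ (k r + d)`, so it is convex and tends to `+∞`, while `j 0 = μI − ρ < 0`. The intermediate
value theorem gives a positive root, and there is only one: if `0 < r < s` were both roots,
convexity would put `j r` on or below the chord from `(0, j 0)` to `(s, 0)`, which is negative at `r`.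
-/

open Real Set Filter

lemma convexOn_rpow_mul_add {b : ℝ} (hb : 0 < b) (k d : ℝ) :
    ConvexOn ℝ univ fun x : ℝ => b ^ (k * x + d) := by
  refine ((convexOn_rpow_left (rpow_pos_of_pos hb k)).smul (rpow_pos_of_pos hb d).le).congr
    fun x _ => ?_
  simp only [smul_eq_mul, ← rpow_mul hb.le, ← rpow_add hb, add_comm]

lemma convexOn_quadratic {A : ℝ} (hA : 0 ≤ A) (B C : ℝ) :
    ConvexOn ℝ univ fun x : ℝ => A * x ^ 2 + B * x + C :=
  ((even_two.convexOn_pow.smul hA).add ((LinearMap.mul ℝ ℝ B).convexOn convex_univ)).add_const C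

lemma tendsto_quadratic_atTop {A : ℝ} (hA : 0 < A) (B C : ℝ) :
    Tendsto (fun x : ℝ => A * x ^ 2 + B * x + C) atTop atTop := by
  have h : Tendsto (fun x : ℝ => x * (A * x + B)) atTop atTop :=
    tendsto_id.atTop_mul_atTop₀ (tendsto_atTop_add_const_right _ B (tendsto_id.const_mul_atTop hA))
  refine tendsto_atTop_add_const_right _ C (h.congr fun x => ?_)
  ring

section ConvexRoot

variable {f : ℝ → ℝ}

lemma ConvexOn.eq_of_apply_eq_zero_of_apply_zero_neg (hf : ConvexOn ℝ (Ici 0) f) (h0 : f 0 < 0)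
    {r s : ℝ} (hr : 0 < r) (hs : 0 < s) (hfr : f r = 0) (hfs : f s = 0) : r = s := by
  have key : ∀ {r s : ℝ}, 0 < r → r < s → f r = 0 → f s = 0 → False := by
    intro r s hr hrs hfr hfs
    have hseg : r ∈ openSegment ℝ 0 s := by rw [openSegment_eq_Ioo (hr.trans hrs)]; exact ⟨hr, hrs⟩
    have := hf.lt_right_of_left_lt self_mem_Ici (hr.trans hrs).le hseg (hfr ▸ h0)
    linarith
  rcases lt_trichotomy r s with hrs | rfl | hsr
  · exact (key hr hrs hfr hfs).elim
  · rfl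
  · exact (key hs hsr hfs hfr).elim

lemma ConvexOn.existsUnique_pos_root (hf : ConvexOn ℝ (Ici 0) f) (hcont : ContinuousOn f (Ici 0))
    (h0 : f 0 < 0) (htop : Tendsto f atTop atTop) : ∃! r : ℝ, 0 < r ∧ f r = 0 := by
  obtain ⟨R, hR, hRpos⟩ := ((htop.eventually_ge_atTop 0).and (eventually_gt_atTop 0)).exists
  obtain ⟨r, hrR, hfr⟩ :=
    intermediate_value_Icc hRpos.le (hcont.mono Icc_subset_Ici_self) ⟨h0.le, hR⟩
  have hr : 0 < r := hrR.1.lt_of_ne (by rintro rfl; linarith)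
  exact ⟨r, ⟨hr, hfr⟩, fun s hs => hf.eq_of_apply_eq_zero_of_apply_zero_neg h0 hs.1 hr hs.2 hfr⟩

end ConvexRoot

theorem j_unique_positive_root_general (θ ρ μX σX lamX mX μI σI lamI mI : ℝ)
    (hlamX : 0 ≤ lamX) (hmX : -1 < mX)
    (hσI : 0 < σI) (hlamI : 0 ≤ lamI) (hmI : -1 < mI)
    (hρ : μI < ρ)
    (j : ℝ → ℝ)
    (hj : ∀ r : ℝ, j r = ((θ ^ 2 * σX ^ 2 + σI ^ 2) / 2) * r ^ 2
      + ((μX - σX ^ 2 / 2 - lamX * mX) * θ - (μI + σI ^ 2 / 2 - lamI * mI)) * r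
      + ((μI - lamI * mI) - (lamX + lamI) - ρ)
      + lamX * (1 + mX) ^ (θ * r) + lamI * (1 + mI) ^ (1 - r)) :
    ∃! r0 : ℝ, 0 < r0 ∧ j r0 = 0 := by
  have hbX : 0 < 1 + mX := by linarith
  have hbI : 0 < 1 + mI := by linarith
  set A := (θ ^ 2 * σX ^ 2 + σI ^ 2) / 2
  set B := (μX - σX ^ 2 / 2 - lamX * mX) * θ - (μI + σI ^ 2 / 2 - lamI * mI)
  set C := (μI - lamI * mI) - (lamX + lamI) - ρ
  have hA : 0 < A := by positivity
  have hconv : ConvexOn ℝ univ j := by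
    refine (((convexOn_quadratic hA.le B C).add ((convexOn_rpow_mul_add hbX θ 0).smul hlamX)).add
      ((convexOn_rpow_mul_add hbI (-1) 1).smul hlamI)).congr fun r _ => ?_
    simp only [hj, Pi.add_apply, smul_eq_mul, add_zero, neg_one_mul, neg_add_eq_sub]
  have hquad_le : ∀ r, A * r ^ 2 + B * r + C ≤ j r := fun r => by
    have := mul_nonneg hlamX (rpow_nonneg hbX.le (θ * r))
    have := mul_nonneg hlamI (rpow_nonneg hbI.le (1 - r))
    linarith [hj r]
  refine (hconv.subset (subset_univ _) (convex_Ici 0)).existsUnique_pos_root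
    ((hconv.continuousOn isOpen_univ).mono (subset_univ _)) ?_
    (tendsto_atTop_mono hquad_le (tendsto_quadratic_atTop hA B C))
  simp only [hj, mul_zero, rpow_zero, sub_zero, rpow_one, C]
  linarith

/-- If `ρ > μI`, then `j` has exactly one positive root. -/
theorem j_unique_positive_root (θ ρ μX σX lamX mX μI σI lamI mI : ℝ)
    (hθ : 0 < θ) (hσX : 0 < σX) (hlamX : 0 ≤ lamX) (hmX : -1 < mX)
    (hσI : 0 < σI) (hlamI : 0 ≤ lamI) (hmI : -1 < mI)
    (hρ : μI < ρ)
    (j : ℝ → ℝ)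
    (hj : ∀ r : ℝ, j r = ((θ ^ 2 * σX ^ 2 + σI ^ 2) / 2) * r ^ 2
      + ((μX - σX ^ 2 / 2 - lamX * mX) * θ - (μI + σI ^ 2 / 2 - lamI * mI)) * r
      + ((μI - lamI * mI) - (lamX + lamI) - ρ)
      + lamX * (1 + mX) ^ (θ * r) + lamI * (1 + mI) ^ (1 - r)) :
    ∃! r0 : ℝ, 0 < r0 ∧ j r0 = 0 :=
  j_unique_positive_root_general θ ρ μX σX lamX mX μI σI lamI mI hlamX hmX hσI hlamI hmI hρ j hj
end

section
/- Assume ρ > μI and h > 0. Then j(1) = −h < 0, and the unique positive root r0 of j satisfies r0 > 1 and j'(r0) > 0. -/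
/-!
At `r = 0` and `r = 1` the jump terms of `j` collapse, giving `j 0 = μI - ρ < 0` and `j 1 = -h < 0`.
Since `j` is a convex quadratic plus nonnegative multiples of exponentials of affine functions of
`r`, it is convex, so it stays negative on `[0, 1]`: a positive root lies beyond `1`. There the
derivative dominates the secant slope from `(1, j 1)`, which is positive.
-/

open Real Set

theorem convexOn_rpow_left_affine {b : ℝ} (hb : 0 < b) (c d : ℝ) :
    ConvexOn ℝ univ fun x : ℝ => b ^ (c * x + d) :=
  (convexOn_rpow_left hb).comp_affineMap
    ((LinearMap.mul ℝ ℝ c).toAffineMap + AffineMap.const ℝ ℝ d)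

section QuadraticAddRpow

variable {A B K a p c b q : ℝ}

theorem convexOn_quadratic_add_rpow_left (hA : 0 ≤ A) (ha : 0 ≤ a) (hp : 0 < p) (hb : 0 ≤ b)
    (hq : 0 < q) :
    ConvexOn ℝ univ fun r : ℝ => A * r ^ 2 + B * r + K + a * p ^ (c * r) + b * q ^ (1 - r) := by
  have hquad : ConvexOn ℝ univ fun r : ℝ => A * r ^ 2 := (even_two.convexOn_pow).smul hA
  have hlin : ConvexOn ℝ univ fun r : ℝ => B * r := (LinearMap.mul ℝ ℝ B).convexOn convex_univ
  have hp' : ConvexOn ℝ univ fun r : ℝ => a * p ^ (c * r) := by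
    simpa using (convexOn_rpow_left_affine hp c 0).smul ha
  have hq' : ConvexOn ℝ univ fun r : ℝ => b * q ^ (1 - r) := by
    simpa [neg_add_eq_sub] using (convexOn_rpow_left_affine hq (-1) 1).smul hb
  exact (((hquad.add hlin).add_const K).add hp').add hq'

theorem differentiable_quadratic_add_rpow_left (hp : 0 < p) (hq : 0 < q) :
    Differentiable ℝ fun r : ℝ => A * r ^ 2 + B * r + K + a * p ^ (c * r) + b * q ^ (1 - r) := by
  fun_prop (disch := exact fun _ => by positivity)

end QuadraticAddRpow

theorem j_root_gt_one_general (θ ρ μX σX lamX mX μI σI lamI mI h : ℝ)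
    (hlamX : 0 ≤ lamX) (hmX : -1 < mX)
    (hlamI : 0 ≤ lamI) (hmI : -1 < mI)
    (hρ : μI < ρ)
    (hh : h = ρ - (μX + (θ - 1) * σX ^ 2 / 2 - lamX * mX) * θ
      - lamX * ((1 + mX) ^ θ - 1))
    (hhpos : 0 < h)
    (j : ℝ → ℝ)
    (hj : ∀ r : ℝ, j r = ((θ ^ 2 * σX ^ 2 + σI ^ 2) / 2) * r ^ 2
      + ((μX - σX ^ 2 / 2 - lamX * mX) * θ - (μI + σI ^ 2 / 2 - lamI * mI)) * r
      + ((μI - lamI * mI) - (lamX + lamI) - ρ)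
      + lamX * (1 + mX) ^ (θ * r) + lamI * (1 + mI) ^ (1 - r)) :
    j 1 = -h ∧ j 1 < 0 ∧
    ∀ r0 : ℝ, 0 < r0 → j r0 = 0 → 1 < r0 ∧ 0 < deriv j r0 := by
  have hpX : 0 < 1 + mX := by linarith
  have hpI : 0 < 1 + mI := by linarith
  have hconv : ConvexOn ℝ univ j := by
    rw [funext hj]; exact convexOn_quadratic_add_rpow_left (by positivity) hlamX hpX hlamI hpI
  have hdiff : Differentiable ℝ j := by
    rw [funext hj]; exact differentiable_quadratic_add_rpow_left hpX hpI
  have hj0 : j 0 = μI - ρ := by simp only [hj, mul_zero, sub_zero, rpow_zero, rpow_one]; ring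
  have hj1 : j 1 = -h := by simp only [hj, hh, mul_one, sub_self, rpow_zero]; ring
  refine ⟨hj1, by linarith, fun r0 hr0 hroot => ?_⟩
  have h1r0 : 1 < r0 := by
    by_contra! hr01
    have hneg : j r0 < 0 :=
      (hconv.le_max_of_mem_Icc (mem_univ 0) (mem_univ 1) ⟨hr0.le, hr01⟩).trans_lt
        (max_lt (by linarith) (by linarith))
    linarith
  have hslope : 0 < slope j 1 r0 := by
    rw [slope_def_field, hroot, hj1]
    exact div_pos (by linarith) (by linarith)
  exact ⟨h1r0, hslope.trans_le (hconv.slope_le_deriv (mem_univ 1) (mem_univ r0) h1r0 (hdiff r0))⟩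

/-- Assume `ρ > μI` and `h > 0`. Then `j(1) = -h < 0`, and the unique
positive root `r0` of `j` satisfies `r0 > 1` and `j'(r0) > 0`. -/
theorem j_root_gt_one (θ ρ μX σX lamX mX μI σI lamI mI h : ℝ)
    (hθ : 0 < θ) (hσX : 0 < σX) (hlamX : 0 ≤ lamX) (hmX : -1 < mX)
    (hσI : 0 < σI) (hlamI : 0 ≤ lamI) (hmI : -1 < mI)
    (hρ : μI < ρ)
    (hh : h = ρ - (μX + (θ - 1) * σX ^ 2 / 2 - lamX * mX) * θ
      - lamX * ((1 + mX) ^ θ - 1))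
    (hhpos : 0 < h)
    (j : ℝ → ℝ)
    (hj : ∀ r : ℝ, j r = ((θ ^ 2 * σX ^ 2 + σI ^ 2) / 2) * r ^ 2
      + ((μX - σX ^ 2 / 2 - lamX * mX) * θ - (μI + σI ^ 2 / 2 - lamI * mI)) * r
      + ((μI - lamI * mI) - (lamX + lamI) - ρ)
      + lamX * (1 + mX) ^ (θ * r) + lamI * (1 + mI) ^ (1 - r)) :
    j 1 = -h ∧ j 1 < 0 ∧
    ∀ r0 : ℝ, 0 < r0 → j r0 = 0 → 1 < r0 ∧ 0 < deriv j r0 :=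
  j_root_gt_one_general θ ρ μX σX lamX mX μI σI lamI mI h hlamX hmX hlamI hmI hρ hh hhpos j hj
end

section
/- Let f : (0,∞) → ℝ be twice continuously differentiable and define V(x,i) = i·f(x^θ/i) for x, i > 0. Then V is twice continuously differentiable on (0,∞)×(0,∞), and for all x, i > 0, writing q = x^θ/i, one has (𝓛V)(x,i) = i·(L_Q f)(q); consequently ρ·V(x,i) − (𝓛V)(x,i) = i·(ρ·f(q) − (L_Q f)(q)). -/
noncomputable def Ltwo (σX σI μX μI lamX lamI mX mI : ℝ) (V : ℝ → ℝ → ℝ) (x i : ℝ) : ℝ :=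
  σX ^ 2 / 2 * x ^ 2 * deriv (deriv (fun x' => V x' i)) x
    + σI ^ 2 / 2 * i ^ 2 * deriv (deriv (fun i' => V x i')) i
    + (μX - lamX * mX) * x * deriv (fun x' => V x' i) x
    + (μI - lamI * mI) * i * deriv (fun i' => V x i') i
    + lamX * (V (x * (1 + mX)) i - V x i)
    + lamI * (V x (i * (1 + mI)) - V x i)

noncomputable def LQ (θ σX σI μX μI lamX lamI mX mI : ℝ) (f : ℝ → ℝ) (q : ℝ) : ℝ :=
  ((θ ^ 2 * σX ^ 2 + σI ^ 2) / 2) * q ^ 2 * deriv (deriv f) q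
    + ((μX + (θ - 1) * σX ^ 2 / 2 - lamX * mX) * θ - (μI - lamI * mI)) * q * deriv f q
    + ((μI - lamI * mI) - (lamX + lamI)) * f q
    + lamX * f (q * (1 + mX) ^ θ) + lamI * (1 + mI) * f (q / (1 + mI))

/-! Write `q = x^θ/i`. By the chain rule, `x ∂ₓV = i θ q f'(q)`,
`x² ∂ₓ²V = i (θ² q² f''(q) + θ (θ-1) q f'(q))`, `i ∂ᵢV = i (f(q) - q f'(q))` and
`i² ∂ᵢ²V = i q² f''(q)`, while the jumps act on `q` multiplicatively:
`V(x(1+mX), i) = i f(q (1+mX)^θ)` and `V(x, i(1+mI)) = i (1+mI) f(q/(1+mI))`.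
Collecting terms gives `i (L_Q f)(q)`. -/

open Real Set

theorem deriv_deriv_eq_of_hasDerivAt {g g' : ℝ → ℝ} {s : Set ℝ} {x a : ℝ} (hs : IsOpen s)
    (hx : x ∈ s) (hg : ∀ y ∈ s, HasDerivAt g (g' y) y) (hg' : HasDerivAt g' a x) :
    deriv (deriv g) x = a := by
  rw [(Filter.eventuallyEq_of_mem (hs.mem_nhds hx) fun y hy => (hg y hy).deriv).deriv_eq]
  exact hg'.deriv

theorem contDiffOn_mul_comp_rpow_div {n : WithTop ℕ∞} {f : ℝ → ℝ} (θ : ℝ)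
    (hf : ContDiffOn ℝ n f (Ioi 0)) :
    ContDiffOn ℝ n (fun p : ℝ × ℝ => p.2 * f (p.1 ^ θ / p.2)) (Ioi 0 ×ˢ Ioi 0) := by
  have hq : MapsTo (fun p : ℝ × ℝ => p.1 ^ θ / p.2) (Ioi 0 ×ˢ Ioi 0) (Ioi 0) :=
    fun p ⟨hp₁, hp₂⟩ => div_pos (rpow_pos_of_pos hp₁ θ) hp₂
  refine contDiffOn_snd.mul (hf.comp ?_ hq)
  exact (contDiffOn_fst.rpow_const_of_ne fun p hp => hp.1.ne').div contDiffOn_snd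
    fun p hp => hp.2.ne'

section

variable {f : ℝ → ℝ} {x i : ℝ}

theorem hasDerivAt_of_contDiffOn_two (hf : ContDiffOn ℝ 2 f (Ioi 0)) {y : ℝ} (hy : 0 < y) :
    HasDerivAt f (deriv f y) y :=
  (hf.contDiffAt (Ioi_mem_nhds hy)).differentiableAt (by norm_num) |>.hasDerivAt

theorem hasDerivAt_deriv_of_contDiffOn_two (hf : ContDiffOn ℝ 2 f (Ioi 0)) {y : ℝ}
    (hy : 0 < y) : HasDerivAt (deriv f) (deriv (deriv f) y) y :=
  ((hf.deriv_of_isOpen isOpen_Ioi (m := 1) (by norm_num)).contDiffAt (Ioi_mem_nhds hy))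
    |>.differentiableAt (by norm_num) |>.hasDerivAt

theorem hasDerivAt_rpow_div_const (θ : ℝ) (hx : 0 < x) (i : ℝ) :
    HasDerivAt (fun x' : ℝ => x' ^ θ / i) (θ * x ^ (θ - 1) / i) x :=
  (hasDerivAt_rpow_const (Or.inl hx.ne')).div_const i

theorem hasDerivAt_const_mul_comp_rpow_div (θ : ℝ) (hf : ContDiffOn ℝ 2 f (Ioi 0)) (hx : 0 < x)
    (hi : 0 < i) :
    HasDerivAt (fun x' => i * f (x' ^ θ / i)) (θ * x ^ (θ - 1) * deriv f (x ^ θ / i)) x := by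
  have hq : 0 < x ^ θ / i := div_pos (rpow_pos_of_pos hx θ) hi
  refine (((hasDerivAt_of_contDiffOn_two hf hq).comp x
    (hasDerivAt_rpow_div_const θ hx i)).const_mul i).congr_deriv ?_
  field_simp

theorem mul_deriv_const_mul_comp_rpow_div (θ : ℝ) (hf : ContDiffOn ℝ 2 f (Ioi 0)) (hx : 0 < x)
    (hi : 0 < i) :
    x * deriv (fun x' => i * f (x' ^ θ / i)) x
      = i * (θ * (x ^ θ / i) * deriv f (x ^ θ / i)) := by
  rw [(hasDerivAt_const_mul_comp_rpow_div θ hf hx hi).deriv, rpow_sub_one hx.ne']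
  field_simp

theorem sq_mul_deriv_deriv_const_mul_comp_rpow_div (θ : ℝ)
    (hf : ContDiffOn ℝ 2 f (Ioi 0))
    (hx : 0 < x) (hi : 0 < i) :
    x ^ 2 * deriv (deriv (fun x' => i * f (x' ^ θ / i))) x
      = i * (θ ^ 2 * (x ^ θ / i) ^ 2 * deriv (deriv f) (x ^ θ / i)
          + θ * (θ - 1) * (x ^ θ / i) * deriv f (x ^ θ / i)) := by
  have hq : 0 < x ^ θ / i := div_pos (rpow_pos_of_pos hx θ) hi
  have hpow : HasDerivAt (fun x' : ℝ => θ * x' ^ (θ - 1)) (θ * ((θ - 1) * x ^ (θ - 1 - 1))) x :=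
    (hasDerivAt_rpow_const (Or.inl hx.ne')).const_mul θ
  have hf' : HasDerivAt (fun x' : ℝ => deriv f (x' ^ θ / i))
      (deriv (deriv f) (x ^ θ / i) * (θ * x ^ (θ - 1) / i)) x := by
    exact (hasDerivAt_deriv_of_contDiffOn_two hf hq).comp x (hasDerivAt_rpow_div_const θ hx i)
  rw [deriv_deriv_eq_of_hasDerivAt isOpen_Ioi hx
    (fun y hy => hasDerivAt_const_mul_comp_rpow_div θ hf hy hi) (hpow.mul hf')]
  simp only [rpow_sub_one hx.ne']
  field_simp
  ring

theorem hasDerivAt_const_div {a : ℝ} (hi : i ≠ 0) :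
    HasDerivAt (fun i' : ℝ => a / i') (-(a / i ^ 2)) i := by
  simpa only [div_eq_mul_inv, neg_mul_eq_mul_neg] using (hasDerivAt_inv hi).const_mul a

theorem hasDerivAt_mul_comp_div (hf : ContDiffOn ℝ 2 f (Ioi 0)) {a : ℝ} (ha : 0 < a)
    (hi : 0 < i) :
    HasDerivAt (fun i' => i' * f (a / i')) (f (a / i) - a / i * deriv f (a / i)) i := by
  have hf' : HasDerivAt (fun i' => f (a / i')) (deriv f (a / i) * -(a / i ^ 2)) i := by
    exact (hasDerivAt_of_contDiffOn_two hf (div_pos ha hi)).comp i (hasDerivAt_const_div hi.ne')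
  refine ((hasDerivAt_id' i).mul hf').congr_deriv ?_
  field_simp
  ring

theorem sq_mul_deriv_deriv_mul_comp_div (hf : ContDiffOn ℝ 2 f (Ioi 0)) {a : ℝ} (ha : 0 < a)
    (hi : 0 < i) :
    i ^ 2 * deriv (deriv (fun i' => i' * f (a / i'))) i
      = i * ((a / i) ^ 2 * deriv (deriv f) (a / i)) := by
  have hq : 0 < a / i := div_pos ha hi
  have hdiv : HasDerivAt (fun i' : ℝ => a / i') (-(a / i ^ 2)) i := hasDerivAt_const_div hi.ne'
  have hf' : HasDerivAt (fun i' => f (a / i')) (deriv f (a / i) * -(a / i ^ 2)) i := by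
    exact (hasDerivAt_of_contDiffOn_two hf hq).comp i hdiv
  have hf'' : HasDerivAt (fun i' => deriv f (a / i'))
      (deriv (deriv f) (a / i) * -(a / i ^ 2)) i := by
    exact (hasDerivAt_deriv_of_contDiffOn_two hf hq).comp i hdiv
  rw [deriv_deriv_eq_of_hasDerivAt isOpen_Ioi hi
    (fun y hy => hasDerivAt_mul_comp_div hf ha hy) (hf'.sub (hdiv.mul hf''))]
  field_simp
  ring

end

theorem generator_reduction_general (θ ρ μX σX lamX mX μI σI lamI mI : ℝ)
    (hmX : -1 < mX)
    (f : ℝ → ℝ) (hf : ContDiffOn ℝ 2 f (Set.Ioi 0))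
    (V : ℝ → ℝ → ℝ) (hV : ∀ x i : ℝ, V x i = i * f (x ^ θ / i)) :
    ContDiffOn ℝ 2 (fun p : ℝ × ℝ => V p.1 p.2) (Set.Ioi 0 ×ˢ Set.Ioi 0)
    ∧ ∀ x i : ℝ, 0 < x → 0 < i →
        Ltwo σX σI μX μI lamX lamI mX mI V x i
          = i * LQ θ σX σI μX μI lamX lamI mX mI f (x ^ θ / i)
        ∧ ρ * V x i - Ltwo σX σI μX μI lamX lamI mX mI V x i
          = i * (ρ * f (x ^ θ / i)
              - LQ θ σX σI μX μI lamX lamI mX mI f (x ^ θ / i)) := by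
  refine ⟨(contDiffOn_mul_comp_rpow_div θ hf).congr fun p _ => hV p.1 p.2, fun x i hx hi => ?_⟩
  have hxθ : 0 < x ^ θ := rpow_pos_of_pos hx θ
  have hL : Ltwo σX σI μX μI lamX lamI mX mI V x i
      = i * LQ θ σX σI μX μI lamX lamI mX mI f (x ^ θ / i) := by
    have hjumpX : (x * (1 + mX)) ^ θ / i = x ^ θ / i * (1 + mX) ^ θ := by
      rw [mul_rpow hx.le (by linarith)]
      ring
    simp only [Ltwo, LQ, hV, hjumpX, ← div_div]
    linear_combination (σX ^ 2 / 2) * sq_mul_deriv_deriv_const_mul_comp_rpow_div θ hf hx hi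
      + (σI ^ 2 / 2) * sq_mul_deriv_deriv_mul_comp_div hf hxθ hi
      + (μX - lamX * mX) * mul_deriv_const_mul_comp_rpow_div θ hf hx hi
      + (μI - lamI * mI) * i * (hasDerivAt_mul_comp_div hf hxθ hi).deriv
  exact ⟨hL, by rw [hL, hV]; ring⟩

/-- If `f` is `C²` on `(0,∞)` and `V(x,i) = i f(x^θ/i)`, then `V` is `C²`
on `(0,∞)²` and `(𝓛V)(x,i) = i (L_Q f)(x^θ/i)`, whence
`ρ V(x,i) - (𝓛V)(x,i) = i (ρ f(q) - (L_Q f)(q))` with `q = x^θ/i`. -/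
theorem generator_reduction (θ ρ μX σX lamX mX μI σI lamI mI : ℝ)
    (hθ : 0 < θ) (hσX : 0 < σX) (hlamX : 0 ≤ lamX) (hmX : -1 < mX)
    (hσI : 0 < σI) (hlamI : 0 ≤ lamI) (hmI : -1 < mI)
    (f : ℝ → ℝ) (hf : ContDiffOn ℝ 2 f (Set.Ioi 0))
    (V : ℝ → ℝ → ℝ) (hV : ∀ x i : ℝ, V x i = i * f (x ^ θ / i)) :
    ContDiffOn ℝ 2 (fun p : ℝ × ℝ => V p.1 p.2) (Set.Ioi 0 ×ˢ Set.Ioi 0)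
    ∧ ∀ x i : ℝ, 0 < x → 0 < i →
        Ltwo σX σI μX μI lamX lamI mX mI V x i
          = i * LQ θ σX σI μX μI lamX lamI mX mI f (x ^ θ / i)
        ∧ ρ * V x i - Ltwo σX σI μX μI lamX lamI mX mI V x i
          = i * (ρ * f (x ^ θ / i)
              - LQ θ σX σI μX μI lamX lamI mX mI f (x ^ θ / i)) :=
  generator_reduction_general θ ρ μX σX lamX mX μI σI lamI mI hmX f hf V hV
end

section
/- Let r0 > 1, A > 0, κ1 > κ0 > 0, θ > 0, set q⋆ = r0/((κ1 − κ0)·A·(r0 − 1)) and b = 1/((r0 − 1)·(q⋆)^(r0)), and define V(x,i) = b·x^(θ·r0)·i^(1−r0) (i.e. V(x,i) = i·b·(x^θ/i)^(r0)) and g(x,i) = (κ1 − κ0)·A·x^θ − i for x, i > 0. Then at every boundary point (x,i) with x^θ/i = q⋆ one has value matching and smooth fit: V(x,i) = g(x,i), ∂V/∂x(x,i) = ∂g/∂x(x,i) = (κ1 − κ0)·A·θ·x^(θ−1), and ∂V/∂i(x,i) = ∂g/∂i(x,i) = −1. -/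
/-!
On the boundary `x^θ = q⋆ i`, so `V(x,i) = b q⋆^r0 i = i/(r0-1)`, and the choice of `q⋆` makes
`(κ1-κ0) A x^θ = r0 i/(r0-1)`, whence `g(x,i) = i/(r0-1)` as well. Since `V` is a product of powers,
`x ∂V/∂x = θ r0 V` and `i ∂V/∂i = (1-r0) V`, while `x ∂g/∂x = θ (κ1-κ0) A x^θ`; substituting the
two boundary values gives the smooth-fit identities.
-/

open Real

theorem deriv_const_mul_rpow {x : ℝ} (hx : x ≠ 0) (a p : ℝ) :
    deriv (fun y => a * y ^ p) x = p * (a * x ^ p) / x := by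
  rw [((hasDerivAt_rpow_const (Or.inl hx)).const_mul a).deriv, rpow_sub_one hx]
  ring

theorem deriv_const_mul_rpow_mul {x : ℝ} (hx : x ≠ 0) (a p c : ℝ) :
    deriv (fun y => a * y ^ p * c) x = p * (a * x ^ p * c) / x := by
  rw [(((hasDerivAt_rpow_const (Or.inl hx)).const_mul a).mul_const c).deriv, rpow_sub_one hx]
  ring

theorem mul_rpow_mul_rpow_one_sub {q i : ℝ} (hq : 0 ≤ q) (hi : 0 < i) (r : ℝ) :
    (q * i) ^ r * i ^ (1 - r) = q ^ r * i := by
  rw [mul_rpow hq hi.le, mul_assoc, ← rpow_add hi, add_sub_cancel, rpow_one]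

theorem smooth_fit_on_boundary_general (r0 A κ0 κ1 θ : ℝ)
    (hr0 : 1 < r0) (hA : 0 < A) (hκ : κ0 < κ1)
    (qs b : ℝ)
    (hqs : qs = r0 / ((κ1 - κ0) * A * (r0 - 1)))
    (hb : b = 1 / ((r0 - 1) * qs ^ r0))
    (V g : ℝ → ℝ → ℝ)
    (hV : ∀ x i : ℝ, V x i = b * x ^ (θ * r0) * i ^ (1 - r0))
    (hg : ∀ x i : ℝ, g x i = (κ1 - κ0) * A * x ^ θ - i) :
    ∀ x i : ℝ, 0 < x → 0 < i → x ^ θ / i = qs →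
      V x i = g x i
      ∧ deriv (fun x' => V x' i) x = deriv (fun x' => g x' i) x
      ∧ deriv (fun x' => g x' i) x = (κ1 - κ0) * A * θ * x ^ (θ - 1)
      ∧ deriv (fun i' => V x i') i = deriv (fun i' => g x i') i
      ∧ deriv (fun i' => g x i') i = -1 := by
  intro x i hx hi hbd
  have hκ' : 0 < κ1 - κ0 := sub_pos.2 hκ
  have hr : 0 < r0 - 1 := sub_pos.2 hr0
  have hqs_pos : 0 < qs := hbd ▸ by positivity
  have hxθ : x ^ θ = qs * i := by rw [← hbd]; field_simp
  have hVxi : V x i = i / (r0 - 1) := by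
    rw [hV, rpow_mul hx.le, hxθ, mul_assoc, mul_rpow_mul_rpow_one_sub hqs_pos.le hi, hb]
    field_simp
  have hcx : (κ1 - κ0) * A * x ^ θ = r0 * i / (r0 - 1) := by
    rw [hxθ, hqs]; field_simp
  have hgxi : g x i = i / (r0 - 1) := by rw [hg, hcx]; field_simp; ring
  have hVx : deriv (fun x' => V x' i) x = θ * r0 * V x i / x := by
    simp only [hV]; exact deriv_const_mul_rpow_mul hx.ne' _ _ _
  have hgx : deriv (fun x' => g x' i) x = θ * ((κ1 - κ0) * A * x ^ θ) / x := by
    simp only [hg, deriv_sub_const]; exact deriv_const_mul_rpow hx.ne' _ _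
  have hVi : deriv (fun i' => V x i') i = (1 - r0) * V x i / i := by
    simp only [hV]; exact deriv_const_mul_rpow hi.ne' _ _
  have hgi : deriv (fun i' => g x i') i = -1 := by
    simp [hg]
  refine ⟨hVxi.trans hgxi.symm, ?_, ?_, ?_, hgi⟩
  · rw [hVx, hgx, hVxi, hcx]; field_simp
  · rw [hgx, rpow_sub_one hx.ne']; ring
  · rw [hVi, hgi, hVxi]; field_simp; ring

/-- Value matching and smooth fit at the boundary `x^θ/i = q⋆`:
the candidate value function `V(x,i) = b x^(θ r0) i^(1-r0)` agrees with the payoff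
`g(x,i) = (κ1-κ0) A x^θ - i` together with both first-order partial derivatives. -/
theorem smooth_fit_on_boundary (r0 A κ0 κ1 θ : ℝ)
    (hr0 : 1 < r0) (hA : 0 < A) (hκ0 : 0 < κ0) (hκ : κ0 < κ1) (hθ : 0 < θ)
    (qs b : ℝ)
    (hqs : qs = r0 / ((κ1 - κ0) * A * (r0 - 1)))
    (hb : b = 1 / ((r0 - 1) * qs ^ r0))
    (V g : ℝ → ℝ → ℝ)
    (hV : ∀ x i : ℝ, V x i = b * x ^ (θ * r0) * i ^ (1 - r0))
    (hg : ∀ x i : ℝ, g x i = (κ1 - κ0) * A * x ^ θ - i) :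
    ∀ x i : ℝ, 0 < x → 0 < i → x ^ θ / i = qs →
      V x i = g x i
      ∧ deriv (fun x' => V x' i) x = deriv (fun x' => g x' i) x
      ∧ deriv (fun x' => g x' i) x = (κ1 - κ0) * A * θ * x ^ (θ - 1)
      ∧ deriv (fun i' => V x i') i = deriv (fun i' => g x i') i
      ∧ deriv (fun i' => g x i') i = -1 :=
  smooth_fit_on_boundary_general r0 A κ0 κ1 θ hr0 hA hκ qs b hqs hb V g hV hg
end

section
/- Fix all parameters except the investment volatility, and let 0 < σI′ < σI″ be two investment volatilities; assume ρ > μI and h > 0 (h and A do not depend on σI). For k ∈ {′, ″} let r0ᵏ be the unique positive root of j with investment volatility σIᵏ (then r0ᵏ > 1) and set q⋆ᵏ = r0ᵏ/((κ1 − κ0)·A·(r0ᵏ − 1)). Then q⋆′ < q⋆″: the investment threshold is strictly increasing in the investment volatility σI. -/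
/-!
`j` is a nonnegative quadratic plus two exponentials in `r`, hence convex, and it is negative at
`0` and `1` (`j 0 = μI - ρ`, `j 1 = -h`), so its positive root lies beyond `1`. Raising `σI` adds
`(σI''² - σI'²)/2 · (r² - r)`, which is positive on `(1, ∞)`; thus `j'' r0' > 0`, and convexity
between `1` and `r0''` forces `r0'' < r0'`. Finally `r ↦ r / (r - 1)` is decreasing on `(1, ∞)`.
-/

open Set Real

theorem convexOn_quadratic_add_rpow {c lX lI a b : ℝ} (hc : 0 ≤ c) (hlX : 0 ≤ lX)
    (hlI : 0 ≤ lI) (ha : 0 < a) (hb : 0 < b) (e d : ℝ) :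
    ConvexOn ℝ univ (fun r : ℝ => c * r ^ 2 + e * r + d + lX * a ^ r + lI * b ^ r) :=
  ((((even_two.convexOn_pow.smul hc).add
    ((LinearMap.lsmul ℝ ℝ e).convexOn convex_univ)).add_const d).add
    ((convexOn_rpow_left ha).smul hlX)).add ((convexOn_rpow_left hb).smul hlI)

noncomputable def jFun (θ ρ μX σX lamX mX μI σI lamI mI : ℝ) (r : ℝ) : ℝ :=
  ((θ ^ 2 * σX ^ 2 + σI ^ 2) / 2) * r ^ 2
    + ((μX - σX ^ 2 / 2 - lamX * mX) * θ - (μI + σI ^ 2 / 2 - lamI * mI)) * r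
    + ((μI - lamI * mI) - (lamX + lamI) - ρ)
    + lamX * (1 + mX) ^ (θ * r) + lamI * (1 + mI) ^ (1 - r)

section jFun

variable (θ ρ μX σX lamX mX μI σI lamI mI : ℝ)

theorem jFun_zero : jFun θ ρ μX σX lamX mX μI σI lamI mI 0 = μI - ρ := by
  simp only [jFun]; norm_num; ring

theorem jFun_one : jFun θ ρ μX σX lamX mX μI σI lamI mI 1
    = -(ρ - (μX + (θ - 1) * σX ^ 2 / 2 - lamX * mX) * θ - lamX * ((1 + mX) ^ θ - 1)) := by
  simp only [jFun]; norm_num; ring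

theorem jFun_sub_jFun (σI' r : ℝ) :
    jFun θ ρ μX σX lamX mX μI σI' lamI mI r - jFun θ ρ μX σX lamX mX μI σI lamI mI r
      = (σI' ^ 2 - σI ^ 2) / 2 * (r ^ 2 - r) := by
  simp only [jFun]; ring

theorem convexOn_jFun {lamX mX lamI mI : ℝ} (hlamX : 0 ≤ lamX) (hmX : -1 < mX)
    (hlamI : 0 ≤ lamI) (hmI : -1 < mI) :
    ConvexOn ℝ univ (jFun θ ρ μX σX lamX mX μI σI lamI mI) := by
  have hX : 0 < 1 + mX := by linarith
  have hI : 0 < 1 + mI := by linarith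
  convert convexOn_quadratic_add_rpow (c := (θ ^ 2 * σX ^ 2 + σI ^ 2) / 2) (by positivity) hlamX
    (mul_nonneg hlamI hI.le) (rpow_pos_of_pos hX θ) (inv_pos.2 hI)
    ((μX - σX ^ 2 / 2 - lamX * mX) * θ - (μI + σI ^ 2 / 2 - lamI * mI))
    ((μI - lamI * mI) - (lamX + lamI) - ρ) using 1
  funext r
  rw [jFun, rpow_mul hX.le, rpow_sub hI, rpow_one, inv_rpow hI.le]
  ring

end jFun

theorem one_lt_of_convexOn_of_root {f : ℝ → ℝ} (hf : ConvexOn ℝ univ f) (h0 : f 0 < 0)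
    (h1 : f 1 < 0) {r : ℝ} (hr : 0 < r) (hfr : f r = 0) : 1 < r := by
  by_contra! hr1
  have := hf.le_max_of_mem_Icc (mem_univ 0) (mem_univ 1) ⟨hr.le, hr1⟩
  rw [hfr] at this
  exact (max_lt h0 h1).not_ge this

theorem lt_of_convexOn_of_root {f : ℝ → ℝ} (hf : ConvexOn ℝ univ f) {a r s : ℝ}
    (ha : f a < 0) (hfr : f r = 0) (has : a ≤ s) (hs : 0 < f s) : r < s := by
  by_contra! hsr
  have := hf.le_max_of_mem_Icc (mem_univ a) (mem_univ r) ⟨has, hsr⟩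
  rw [hfr, max_eq_right ha.le] at this
  exact hs.not_ge this

theorem strictAntiOn_div_mul_sub_one {K : ℝ} (hK : 0 < K) :
    StrictAntiOn (fun r : ℝ => r / (K * (r - 1))) (Ioi 1) := by
  intro s hs r hr hsr
  simp only [mem_Ioi] at hs hr
  rw [div_lt_div_iff₀ (by nlinarith) (by nlinarith)]
  nlinarith

theorem threshold_increasing_in_sigmaI_general (θ ρ μX σX lamX mX μI lamI mI n κ0 κ1 h A : ℝ)
    (hlamX : 0 ≤ lamX) (hmX : -1 < mX)
    (hlamI : 0 ≤ lamI) (hmI : -1 < mI)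
    (hκ : κ0 < κ1)
    (hρ : μI < ρ)
    (hh : h = ρ - (μX + (θ - 1) * σX ^ 2 / 2 - lamX * mX) * θ
      - lamX * ((1 + mX) ^ θ - 1))
    (hhpos : 0 < h)
    (hA : A = Real.exp (-(h * n)) / h)
    (σI' σI'' : ℝ) (hσI' : 0 < σI') (hσ : σI' < σI'')
    (j' j'' : ℝ → ℝ)
    (hj' : ∀ r : ℝ, j' r = ((θ ^ 2 * σX ^ 2 + σI' ^ 2) / 2) * r ^ 2
      + ((μX - σX ^ 2 / 2 - lamX * mX) * θ - (μI + σI' ^ 2 / 2 - lamI * mI)) * r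
      + ((μI - lamI * mI) - (lamX + lamI) - ρ)
      + lamX * (1 + mX) ^ (θ * r) + lamI * (1 + mI) ^ (1 - r))
    (hj'' : ∀ r : ℝ, j'' r = ((θ ^ 2 * σX ^ 2 + σI'' ^ 2) / 2) * r ^ 2
      + ((μX - σX ^ 2 / 2 - lamX * mX) * θ - (μI + σI'' ^ 2 / 2 - lamI * mI)) * r
      + ((μI - lamI * mI) - (lamX + lamI) - ρ)
      + lamX * (1 + mX) ^ (θ * r) + lamI * (1 + mI) ^ (1 - r))
    (r0' r0'' : ℝ)
    (hr0' : 0 < r0' ∧ j' r0' = 0) (hr0'' : 0 < r0'' ∧ j'' r0'' = 0) :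
    1 < r0' ∧ 1 < r0''
    ∧ r0' / ((κ1 - κ0) * A * (r0' - 1)) < r0'' / ((κ1 - κ0) * A * (r0'' - 1)) := by
  obtain rfl : j' = jFun θ ρ μX σX lamX mX μI σI' lamI mI := funext hj'
  obtain rfl : j'' = jFun θ ρ μX σX lamX mX μI σI'' lamI mI := funext hj''
  have hconv' := convexOn_jFun θ ρ μX σX μI σI' hlamX hmX hlamI hmI
  have hconv'' := convexOn_jFun θ ρ μX σX μI σI'' hlamX hmX hlamI hmI
  have hneg1 : ∀ σ, jFun θ ρ μX σX lamX mX μI σ lamI mI 1 < 0 := fun σ => by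
    rw [jFun_one, ← hh]; linarith
  have hneg0 : ∀ σ, jFun θ ρ μX σX lamX mX μI σ lamI mI 0 < 0 := fun σ => by
    rw [jFun_zero]; linarith
  have hr1' := one_lt_of_convexOn_of_root hconv' (hneg0 _) (hneg1 _) hr0'.1 hr0'.2
  have hr1'' := one_lt_of_convexOn_of_root hconv'' (hneg0 _) (hneg1 _) hr0''.1 hr0''.2
  have hpos : 0 < jFun θ ρ μX σX lamX mX μI σI'' lamI mI r0' := by
    have := jFun_sub_jFun θ ρ μX σX lamX mX μI σI' lamI mI σI'' r0'
    rw [hr0'.2, sub_zero] at this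
    rw [this]
    have : 0 < r0' ^ 2 - r0' := by nlinarith
    have : 0 < σI'' ^ 2 - σI' ^ 2 := by nlinarith
    positivity
  have hlt : r0'' < r0' := lt_of_convexOn_of_root hconv'' (hneg1 _) hr0''.2 hr1'.le hpos
  have hK : 0 < (κ1 - κ0) * A := mul_pos (by linarith) (hA ▸ div_pos (exp_pos _) hhpos)
  exact ⟨hr1', hr1'', strictAntiOn_div_mul_sub_one hK hr1'' hr1' hlt⟩

/-- The investment threshold `q⋆ = r0/((κ1-κ0) A (r0-1))` is strictly
increasing in the investment volatility `σI`. -/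
theorem threshold_increasing_in_sigmaI (θ ρ μX σX lamX mX μI lamI mI n κ0 κ1 h A : ℝ)
    (hθ : 0 < θ) (hσX : 0 < σX) (hlamX : 0 ≤ lamX) (hmX : -1 < mX)
    (hlamI : 0 ≤ lamI) (hmI : -1 < mI)
    (hn : 0 ≤ n) (hκ0 : 0 < κ0) (hκ : κ0 < κ1)
    (hρ : μI < ρ)
    (hh : h = ρ - (μX + (θ - 1) * σX ^ 2 / 2 - lamX * mX) * θ
      - lamX * ((1 + mX) ^ θ - 1))
    (hhpos : 0 < h)
    (hA : A = Real.exp (-(h * n)) / h)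
    (σI' σI'' : ℝ) (hσI' : 0 < σI') (hσ : σI' < σI'')
    (j' j'' : ℝ → ℝ)
    (hj' : ∀ r : ℝ, j' r = ((θ ^ 2 * σX ^ 2 + σI' ^ 2) / 2) * r ^ 2
      + ((μX - σX ^ 2 / 2 - lamX * mX) * θ - (μI + σI' ^ 2 / 2 - lamI * mI)) * r
      + ((μI - lamI * mI) - (lamX + lamI) - ρ)
      + lamX * (1 + mX) ^ (θ * r) + lamI * (1 + mI) ^ (1 - r))
    (hj'' : ∀ r : ℝ, j'' r = ((θ ^ 2 * σX ^ 2 + σI'' ^ 2) / 2) * r ^ 2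
      + ((μX - σX ^ 2 / 2 - lamX * mX) * θ - (μI + σI'' ^ 2 / 2 - lamI * mI)) * r
      + ((μI - lamI * mI) - (lamX + lamI) - ρ)
      + lamX * (1 + mX) ^ (θ * r) + lamI * (1 + mI) ^ (1 - r))
    (r0' r0'' : ℝ)
    (hr0' : 0 < r0' ∧ j' r0' = 0) (hr0'' : 0 < r0'' ∧ j'' r0'' = 0) :
    1 < r0' ∧ 1 < r0''
    ∧ r0' / ((κ1 - κ0) * A * (r0' - 1)) < r0'' / ((κ1 - κ0) * A * (r0'' - 1)) :=
  threshold_increasing_in_sigmaI_general θ ρ μX σX lamX mX μI lamI mI n κ0 κ1 h A hlamX hmX hlamI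
    hmI hκ hρ hh hhpos hA σI' σI'' hσI' hσ j' j'' hj' hj'' r0' r0'' hr0' hr0''
end

section
/- Fix all parameters except the investment jump intensity, assume mI ≠ 0, and let 0 ≤ λI′ < λI″ be two jump intensities; assume ρ > μI and h > 0 (h and A do not depend on λI). For k ∈ {′, ″} let r0ᵏ be the unique positive root of j with investment jump intensity λIᵏ (then r0ᵏ > 1) and set q⋆ᵏ = r0ᵏ/((κ1 − κ0)·A·(r0ᵏ − 1)). Then q⋆′ < q⋆″: the investment threshold is strictly increasing in the investment jump intensity λI. -/
/-!
The function `j` is convex, being a quadratic with nonnegative leading coefficient plus nonnegative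
multiples of exponentials in `r`, and it is negative at `0` and `1` since `j 0 = μI - ρ` and
`j 1 = -h`. Hence a positive root `r0` of `j` exceeds `1`, and `j` cannot be positive at a point of
`[1, r0]`. Raising `λI` from `λI'` to `λI''` adds `(λI'' - λI') ((1 + mI)^(1 - r) - 1 - (1 - r) mI)`
to `j`, which is positive for `r > 1` by Bernoulli's inequality with a negative exponent. So the
new `j` is positive at the old root `r0'`, which forces `r0'' < r0'`; finally
`r ↦ r / (c (r - 1))` is decreasing on `(1, ∞)`.
-/

open Set Real

theorem one_add_mul_self_lt_rpow_one_add_of_neg {s : ℝ} (hs : -1 < s) (hs' : s ≠ 0) {p : ℝ}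
    (hp : p < 0) : 1 + p * s < (1 + s) ^ p := by
  have hs1 : 0 < 1 + s := by linarith
  have hlog : log (1 + s) ≠ 0 := log_ne_zero_of_pos_of_ne_one hs1 (by simpa using hs')
  have hlog_lt : log (1 + s) < s := by
    linarith [log_lt_sub_one_of_pos hs1 (by simpa using hs')]
  calc 1 + p * s < 1 + p * log (1 + s) := by nlinarith
    _ < exp (log (1 + s) * p) := by linarith [add_one_lt_exp (mul_ne_zero hlog hp.ne)]
    _ = (1 + s) ^ p := (rpow_def_of_pos hs1 p).symm

theorem ConvexOn.lt_of_le_of_max_lt {s : Set ℝ} {f : ℝ → ℝ} (hf : ConvexOn ℝ s f) {x y z : ℝ}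
    (hx : x ∈ s) (hy : y ∈ s) (hxz : x ≤ z) (h : max (f x) (f y) < f z) : y < z := by
  by_contra! hzy
  have hz : z ∈ segment ℝ x y := segment_eq_Icc (hxz.trans hzy) ▸ ⟨hxz, hzy⟩
  exact (hf.le_on_segment hx hy hz).not_gt h

theorem div_mul_sub_one_lt_div_mul_sub_one {a b c : ℝ} (hc : 0 < c) (ha : 1 < a) (hab : a < b) :
    b / (c * (b - 1)) < a / (c * (a - 1)) := by
  rw [div_lt_div_iff₀ (by nlinarith) (by nlinarith)]
  nlinarith [mul_pos hc (sub_pos.2 hab)]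

section CharFn

variable (θ ρ μX σX lamX mX μI σI mI : ℝ)

/-- The function `j` of the model, with the investment jump intensity `lamI` made explicit. -/
noncomputable def charFn (lamI r : ℝ) : ℝ :=
  ((θ ^ 2 * σX ^ 2 + σI ^ 2) / 2) * r ^ 2
    + ((μX - σX ^ 2 / 2 - lamX * mX) * θ - (μI + σI ^ 2 / 2 - lamI * mI)) * r
    + ((μI - lamI * mI) - (lamX + lamI) - ρ)
    + lamX * (1 + mX) ^ (θ * r) + lamI * (1 + mI) ^ (1 - r)

variable {θ ρ μX σX lamX mX μI σI mI}

theorem charFn_zero (lamI : ℝ) : charFn θ ρ μX σX lamX mX μI σI mI lamI 0 = μI - ρ := by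
  simp only [charFn, mul_zero, sub_zero, rpow_zero, rpow_one]
  ring

theorem charFn_one (lamI : ℝ) :
    charFn θ ρ μX σX lamX mX μI σI mI lamI 1
      = -(ρ - (μX + (θ - 1) * σX ^ 2 / 2 - lamX * mX) * θ - lamX * ((1 + mX) ^ θ - 1)) := by
  simp only [charFn, mul_one, sub_self, rpow_zero]
  ring

theorem charFn_sub_charFn (lamI₁ lamI₂ r : ℝ) :
    charFn θ ρ μX σX lamX mX μI σI mI lamI₂ r - charFn θ ρ μX σX lamX mX μI σI mI lamI₁ r
      = (lamI₂ - lamI₁) * ((1 + mI) ^ (1 - r) - (1 + (1 - r) * mI)) := by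
  simp only [charFn]
  ring

theorem convexOn_charFn {lamI : ℝ} (hlamX : 0 ≤ lamX) (hmX : -1 < mX) (hmI : -1 < mI)
    (hlamI : 0 ≤ lamI) : ConvexOn ℝ univ (charFn θ ρ μX σX lamX mX μI σI mI lamI) := by
  have hquad : ConvexOn ℝ univ fun r : ℝ ↦ ((θ ^ 2 * σX ^ 2 + σI ^ 2) / 2) * r ^ 2 :=
    (even_two.convexOn_pow).smul (by positivity)
  have hlin : ConvexOn ℝ univ fun r : ℝ ↦
      ((μX - σX ^ 2 / 2 - lamX * mX) * θ - (μI + σI ^ 2 / 2 - lamI * mI)) * r :=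
    (LinearMap.mul ℝ ℝ _).convexOn convex_univ
  have hX : ConvexOn ℝ univ fun r : ℝ ↦ lamX * (1 + mX) ^ (θ * r) :=
    ((convexOn_rpow_left (by linarith)).comp_linearMap (LinearMap.mul ℝ ℝ θ)).smul hlamX
  have hI : ConvexOn ℝ univ fun r : ℝ ↦ lamI * (1 + mI) ^ (1 - r) := by
    have := (convexOn_rpow_left (show 0 < 1 + mI by linarith)).comp_affineMap
      (AffineMap.const ℝ ℝ (1 : ℝ) - LinearMap.id.toAffineMap)
    exact ConvexOn.smul hlamI (by simpa [Function.comp_def] using this)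
  exact (((hquad.add hlin).add_const _).add hX).add hI

theorem one_lt_of_charFn_eq_zero {lamI r : ℝ} (hlamX : 0 ≤ lamX) (hmX : -1 < mX) (hmI : -1 < mI)
    (hlamI : 0 ≤ lamI) (hρ : μI < ρ)
    (hh : 0 < ρ - (μX + (θ - 1) * σX ^ 2 / 2 - lamX * mX) * θ - lamX * ((1 + mX) ^ θ - 1))
    (hr : 0 < r) (hr0 : charFn θ ρ μX σX lamX mX μI σI mI lamI r = 0) : 1 < r := by
  have hconv : ConvexOn ℝ univ (charFn θ ρ μX σX lamX mX μI σI mI lamI) :=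
    convexOn_charFn hlamX hmX hmI hlamI
  refine hconv.lt_of_le_of_max_lt trivial trivial hr.le ?_
  rw [charFn_zero, charFn_one, hr0]
  exact max_lt (by linarith) (by linarith)

theorem lt_of_charFn_eq_zero_of_lt {lamI₁ lamI₂ r₁ r₂ : ℝ} (hlamX : 0 ≤ lamX) (hmX : -1 < mX)
    (hmI : -1 < mI) (hmI0 : mI ≠ 0) (hlamI₁ : 0 ≤ lamI₁) (hlam : lamI₁ < lamI₂)
    (hh : 0 < ρ - (μX + (θ - 1) * σX ^ 2 / 2 - lamX * mX) * θ - lamX * ((1 + mX) ^ θ - 1))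
    (hr₁ : 1 < r₁) (h₁ : charFn θ ρ μX σX lamX mX μI σI mI lamI₁ r₁ = 0)
    (h₂ : charFn θ ρ μX σX lamX mX μI σI mI lamI₂ r₂ = 0) : r₂ < r₁ := by
  have hpos : 0 < charFn θ ρ μX σX lamX mX μI σI mI lamI₂ r₁ := by
    have hbern := one_add_mul_self_lt_rpow_one_add_of_neg hmI hmI0 (sub_neg.2 hr₁)
    calc 0 < (lamI₂ - lamI₁) * ((1 + mI) ^ (1 - r₁) - (1 + (1 - r₁) * mI)) :=
          mul_pos (sub_pos.2 hlam) (sub_pos.2 hbern)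
      _ = charFn θ ρ μX σX lamX mX μI σI mI lamI₂ r₁ - charFn θ ρ μX σX lamX mX μI σI mI lamI₁ r₁ :=
          (charFn_sub_charFn lamI₁ lamI₂ r₁).symm
      _ = charFn θ ρ μX σX lamX mX μI σI mI lamI₂ r₁ := by rw [h₁, sub_zero]
  have hconv : ConvexOn ℝ univ (charFn θ ρ μX σX lamX mX μI σI mI lamI₂) :=
    convexOn_charFn hlamX hmX hmI (hlamI₁.trans hlam.le)
  refine hconv.lt_of_le_of_max_lt trivial trivial hr₁.le ?_
  rw [charFn_one, h₂, max_eq_right (by linarith)]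
  exact hpos

end CharFn

theorem threshold_increasing_in_lamI_general (θ ρ μX σX lamX mX μI σI mI n κ0 κ1 h A : ℝ)
    (hlamX : 0 ≤ lamX) (hmX : -1 < mX)
    (hmI : -1 < mI) (hmI0 : mI ≠ 0)
    (hκ : κ0 < κ1)
    (hρ : μI < ρ)
    (hh : h = ρ - (μX + (θ - 1) * σX ^ 2 / 2 - lamX * mX) * θ
      - lamX * ((1 + mX) ^ θ - 1))
    (hhpos : 0 < h)
    (hA : A = Real.exp (-(h * n)) / h)
    (lamI' lamI'' : ℝ) (hlamI' : 0 ≤ lamI') (hlam : lamI' < lamI'')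
    (j' j'' : ℝ → ℝ)
    (hj' : ∀ r : ℝ, j' r = ((θ ^ 2 * σX ^ 2 + σI ^ 2) / 2) * r ^ 2
      + ((μX - σX ^ 2 / 2 - lamX * mX) * θ - (μI + σI ^ 2 / 2 - lamI' * mI)) * r
      + ((μI - lamI' * mI) - (lamX + lamI') - ρ)
      + lamX * (1 + mX) ^ (θ * r) + lamI' * (1 + mI) ^ (1 - r))
    (hj'' : ∀ r : ℝ, j'' r = ((θ ^ 2 * σX ^ 2 + σI ^ 2) / 2) * r ^ 2
      + ((μX - σX ^ 2 / 2 - lamX * mX) * θ - (μI + σI ^ 2 / 2 - lamI'' * mI)) * r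
      + ((μI - lamI'' * mI) - (lamX + lamI'') - ρ)
      + lamX * (1 + mX) ^ (θ * r) + lamI'' * (1 + mI) ^ (1 - r))
    (r0' r0'' : ℝ)
    (hr0' : 0 < r0' ∧ j' r0' = 0) (hr0'' : 0 < r0'' ∧ j'' r0'' = 0) :
    1 < r0' ∧ 1 < r0''
    ∧ r0' / ((κ1 - κ0) * A * (r0' - 1)) < r0'' / ((κ1 - κ0) * A * (r0'' - 1)) := by
  obtain rfl : j' = charFn θ ρ μX σX lamX mX μI σI mI lamI' := funext hj'
  obtain rfl : j'' = charFn θ ρ μX σX lamX mX μI σI mI lamI'' := funext hj''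
  have hh' := hh ▸ hhpos
  have hgt' := one_lt_of_charFn_eq_zero hlamX hmX hmI hlamI' hρ hh' hr0'.1 hr0'.2
  have hgt'' := one_lt_of_charFn_eq_zero hlamX hmX hmI (hlamI'.trans hlam.le) hρ hh' hr0''.1 hr0''.2
  have hlt := lt_of_charFn_eq_zero_of_lt hlamX hmX hmI hmI0 hlamI' hlam hh' hgt' hr0'.2 hr0''.2
  have hApos : 0 < A := hA ▸ by positivity
  exact ⟨hgt', hgt'', div_mul_sub_one_lt_div_mul_sub_one (mul_pos (sub_pos.2 hκ) hApos) hgt'' hlt⟩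

/-- The investment threshold `q⋆ = r0/((κ1-κ0) A (r0-1))` is strictly
increasing in the investment jump intensity `λI` (for `mI ≠ 0`). -/
theorem threshold_increasing_in_lamI (θ ρ μX σX lamX mX μI σI mI n κ0 κ1 h A : ℝ)
    (hθ : 0 < θ) (hσX : 0 < σX) (hlamX : 0 ≤ lamX) (hmX : -1 < mX)
    (hσI : 0 < σI) (hmI : -1 < mI) (hmI0 : mI ≠ 0)
    (hn : 0 ≤ n) (hκ0 : 0 < κ0) (hκ : κ0 < κ1)
    (hρ : μI < ρ)
    (hh : h = ρ - (μX + (θ - 1) * σX ^ 2 / 2 - lamX * mX) * θ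
      - lamX * ((1 + mX) ^ θ - 1))
    (hhpos : 0 < h)
    (hA : A = Real.exp (-(h * n)) / h)
    (lamI' lamI'' : ℝ) (hlamI' : 0 ≤ lamI') (hlam : lamI' < lamI'')
    (j' j'' : ℝ → ℝ)
    (hj' : ∀ r : ℝ, j' r = ((θ ^ 2 * σX ^ 2 + σI ^ 2) / 2) * r ^ 2
      + ((μX - σX ^ 2 / 2 - lamX * mX) * θ - (μI + σI ^ 2 / 2 - lamI' * mI)) * r
      + ((μI - lamI' * mI) - (lamX + lamI') - ρ)
      + lamX * (1 + mX) ^ (θ * r) + lamI' * (1 + mI) ^ (1 - r))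
    (hj'' : ∀ r : ℝ, j'' r = ((θ ^ 2 * σX ^ 2 + σI ^ 2) / 2) * r ^ 2
      + ((μX - σX ^ 2 / 2 - lamX * mX) * θ - (μI + σI ^ 2 / 2 - lamI'' * mI)) * r
      + ((μI - lamI'' * mI) - (lamX + lamI'') - ρ)
      + lamX * (1 + mX) ^ (θ * r) + lamI'' * (1 + mI) ^ (1 - r))
    (r0' r0'' : ℝ)
    (hr0' : 0 < r0' ∧ j' r0' = 0) (hr0'' : 0 < r0'' ∧ j'' r0'' = 0) :
    1 < r0' ∧ 1 < r0''
    ∧ r0' / ((κ1 - κ0) * A * (r0' - 1)) < r0'' / ((κ1 - κ0) * A * (r0'' - 1)) :=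
  threshold_increasing_in_lamI_general θ ρ μX σX lamX mX μI σI mI n κ0 κ1 h A hlamX hmX hmI hmI0 hκ
    hρ hh hhpos hA lamI' lamI'' hlamI' hlam j' j'' hj' hj'' r0' r0'' hr0' hr0''
end

section
/- Assume 0 < θ ≤ 1, and fix all parameters except the demand volatility. Let 0 < σX′ < σX″ be two demand volatilities; for k ∈ {′, ″} let hᵏ, jᵏ be h and j computed with σX = σXᵏ, assume ρ > μI and h′ > 0 (then h″ ≥ h′ > 0), let r0ᵏ be the unique positive root of jᵏ (then r0ᵏ > 1), set Aᵏ = e^(−hᵏ·n)/hᵏ and q⋆ᵏ = r0ᵏ/((κ1 − κ0)·Aᵏ·(r0ᵏ − 1)). If in addition θ·r0′ ≥ 1, then q⋆′ < q⋆″: the investment threshold is strictly increasing in the demand volatility σX. -/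
/-!
The function `j` is convex (a quadratic with nonnegative leading coefficient plus nonnegative
multiples of exponentials) with `j 0 = μI - ρ < 0` and `j 1 = -h < 0`, so on `(0, ∞)` it changes
sign at most once and its positive root exceeds `1`. Raising `σX` from `σX'` to `σX''` raises `h`
by `θ (1 - θ) (σX''² - σX'²) / 2 ≥ 0`, hence lowers `A = e^{-hn} / h`, and raises `j r` by
`(σX''² - σX'²) (θ r / 2) (θ r - 1)`, which is `≥ 0` at `r = r0'` because `θ r0' ≥ 1`; hence
`r0'' ≤ r0'`. The threshold `q⋆` decreases in both `A` and `r0`, so it increases with `σX`, strictly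
because either `θ < 1` and `h` grows strictly, or `θ = 1` and `j'' r0' > 0`.
-/

open Real Set

theorem convexOn_quadratic_s17 {a : ℝ} (ha : 0 ≤ a) (b c : ℝ) :
    ConvexOn ℝ univ fun r : ℝ => a * r ^ 2 + b * r + c := by
  refine ⟨convex_univ, fun x _ y _ s t hs ht hst => ?_⟩
  obtain rfl : t = 1 - s := by linarith
  simp only [smul_eq_mul]
  nlinarith [mul_nonneg (mul_nonneg ha (mul_nonneg hs ht)) (sq_nonneg (x - y))]

theorem convexOn_rpow_affine {b : ℝ} (hb : 0 < b) (c d : ℝ) :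
    ConvexOn ℝ univ fun r : ℝ => b ^ (c * r + d) := by
  simpa [Function.comp_def] using
    (convexOn_rpow_left hb).comp_affineMap (c • AffineMap.id ℝ ℝ + AffineMap.const ℝ ℝ d)

theorem ConvexOn.le_of_apply_nonpos_of_apply_nonneg {f : ℝ → ℝ} (hf : ConvexOn ℝ univ f)
    (h0 : f 0 < 0) {a b : ℝ} (ha : f a ≤ 0) (hb : 0 < b) (hfb : 0 ≤ f b) : a ≤ b := by
  by_contra! hba
  have hmem : b ∈ openSegment ℝ 0 a := by
    rw [openSegment_eq_Ioo (hb.trans hba)]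
    exact ⟨hb, hba⟩
  linarith [hf.lt_right_of_left_lt (mem_univ _) (mem_univ _) hmem (h0.trans_le hfb)]

theorem strictAntiOn_exp_neg_mul_div {n : ℝ} (hn : 0 ≤ n) :
    StrictAntiOn (fun h => exp (-(h * n)) / h) (Ioi 0) := by
  intro h₁ h₁pos h₂ h₂pos h12
  calc exp (-(h₂ * n)) / h₂ ≤ exp (-(h₁ * n)) / h₂ := by
        gcongr
        exact le_of_lt h₂pos
    _ < exp (-(h₁ * n)) / h₁ := div_lt_div_of_pos_left (exp_pos _) h₁pos h12

/-- The paper's `h`. -/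
noncomputable def effectiveDiscount (θ ρ μX lamX mX σX : ℝ) : ℝ :=
  ρ - (μX + (θ - 1) * σX ^ 2 / 2 - lamX * mX) * θ - lamX * ((1 + mX) ^ θ - 1)

/-- The paper's `j`. -/
noncomputable def characteristicFn (θ ρ μX lamX mX μI σI lamI mI σX r : ℝ) : ℝ :=
  ((θ ^ 2 * σX ^ 2 + σI ^ 2) / 2) * r ^ 2
    + ((μX - σX ^ 2 / 2 - lamX * mX) * θ - (μI + σI ^ 2 / 2 - lamI * mI)) * r
    + ((μI - lamI * mI) - (lamX + lamI) - ρ)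
    + lamX * (1 + mX) ^ (θ * r) + lamI * (1 + mI) ^ (1 - r)

/-- The paper's `q⋆`, with `κ = κ1 - κ0`. -/
noncomputable def investmentThreshold (κ A r : ℝ) : ℝ :=
  r / (κ * A * (r - 1))

theorem investmentThreshold_lt_investmentThreshold {κ A₁ A₂ r₁ r₂ : ℝ} (hκ : 0 < κ)
    (hA₂ : 0 < A₂) (hA : A₂ ≤ A₁) (hr₂ : 1 < r₂) (hr : r₂ ≤ r₁) (hlt : r₂ < r₁ ∨ A₂ < A₁) :
    investmentThreshold κ A₁ r₁ < investmentThreshold κ A₂ r₂ := by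
  have hr₂' : 0 < r₂ - 1 := by linarith
  have hr₁' : 0 < r₁ - 1 := by linarith
  have hA₁ : 0 < A₁ := hA₂.trans_le hA
  rw [investmentThreshold, investmentThreshold, div_lt_div_iff₀ (by positivity) (by positivity)]
  suffices r₁ * (r₂ - 1) * A₂ < r₂ * (r₁ - 1) * A₁ by nlinarith
  have hcross : r₁ * (r₂ - 1) ≤ r₂ * (r₁ - 1) := by linarith
  rcases hlt with hlt | hlt
  · calc r₁ * (r₂ - 1) * A₂ < r₂ * (r₁ - 1) * A₂ := mul_lt_mul_of_pos_right (by linarith) hA₂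
      _ ≤ r₂ * (r₁ - 1) * A₁ := by gcongr
  · calc r₁ * (r₂ - 1) * A₂ ≤ r₂ * (r₁ - 1) * A₂ := by gcongr
      _ < r₂ * (r₁ - 1) * A₁ := by gcongr

section InvestmentModel

variable {θ ρ μX lamX mX μI σI lamI mI : ℝ}

theorem effectiveDiscount_eq_add (σ₁ σ₂ : ℝ) :
    effectiveDiscount θ ρ μX lamX mX σ₂
      = effectiveDiscount θ ρ μX lamX mX σ₁ + θ * (1 - θ) * (σ₂ ^ 2 - σ₁ ^ 2) / 2 := by
  unfold effectiveDiscount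
  ring

theorem effectiveDiscount_le_of_sq_le (hθ : 0 ≤ θ) (hθ1 : θ ≤ 1) {σ₁ σ₂ : ℝ}
    (hσ : σ₁ ^ 2 ≤ σ₂ ^ 2) :
    effectiveDiscount θ ρ μX lamX mX σ₁ ≤ effectiveDiscount θ ρ μX lamX mX σ₂ := by
  rw [effectiveDiscount_eq_add σ₁ σ₂, le_add_iff_nonneg_right]
  have := sub_nonneg.2 hθ1
  have := sub_nonneg.2 hσ
  positivity

theorem effectiveDiscount_lt_of_sq_lt (hθ : 0 < θ) (hθ1 : θ < 1) {σ₁ σ₂ : ℝ}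
    (hσ : σ₁ ^ 2 < σ₂ ^ 2) :
    effectiveDiscount θ ρ μX lamX mX σ₁ < effectiveDiscount θ ρ μX lamX mX σ₂ := by
  rw [effectiveDiscount_eq_add σ₁ σ₂, lt_add_iff_pos_right]
  have := sub_pos.2 hθ1
  have := sub_pos.2 hσ
  positivity

theorem characteristicFn_zero (σX : ℝ) :
    characteristicFn θ ρ μX lamX mX μI σI lamI mI σX 0 = μI - ρ := by
  simp [characteristicFn]
  ring

theorem characteristicFn_one (σX : ℝ) :
    characteristicFn θ ρ μX lamX mX μI σI lamI mI σX 1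
      = -effectiveDiscount θ ρ μX lamX mX σX := by
  simp [characteristicFn, effectiveDiscount]
  ring

theorem characteristicFn_eq_add (σ₁ σ₂ r : ℝ) :
    characteristicFn θ ρ μX lamX mX μI σI lamI mI σ₂ r
      = characteristicFn θ ρ μX lamX mX μI σI lamI mI σ₁ r
        + (σ₂ ^ 2 - σ₁ ^ 2) * (θ * r / 2) * (θ * r - 1) := by
  unfold characteristicFn
  ring

theorem characteristicFn_nonneg_of_eq_zero {σ₁ σ₂ r : ℝ} (hσ : σ₁ ^ 2 ≤ σ₂ ^ 2)
    (hθr : 1 ≤ θ * r) (hroot : characteristicFn θ ρ μX lamX mX μI σI lamI mI σ₁ r = 0) :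
    0 ≤ characteristicFn θ ρ μX lamX mX μI σI lamI mI σ₂ r := by
  rw [characteristicFn_eq_add σ₁, hroot, zero_add]
  exact mul_nonneg (mul_nonneg (by linarith) (by linarith)) (by linarith)

theorem characteristicFn_pos_of_eq_zero {σ₁ σ₂ r : ℝ} (hσ : σ₁ ^ 2 < σ₂ ^ 2)
    (hθr : 1 < θ * r) (hroot : characteristicFn θ ρ μX lamX mX μI σI lamI mI σ₁ r = 0) :
    0 < characteristicFn θ ρ μX lamX mX μI σI lamI mI σ₂ r := by
  rw [characteristicFn_eq_add σ₁, hroot, zero_add]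
  exact mul_pos (mul_pos (by linarith) (by linarith)) (by linarith)

theorem convexOn_characteristicFn (hlamX : 0 ≤ lamX) (hmX : -1 < mX) (hlamI : 0 ≤ lamI)
    (hmI : -1 < mI) (σX : ℝ) :
    ConvexOn ℝ univ (characteristicFn θ ρ μX lamX mX μI σI lamI mI σX) := by
  have hQ := convexOn_quadratic_s17 (a := (θ ^ 2 * σX ^ 2 + σI ^ 2) / 2) (by positivity)
    ((μX - σX ^ 2 / 2 - lamX * mX) * θ - (μI + σI ^ 2 / 2 - lamI * mI))
    ((μI - lamI * mI) - (lamX + lamI) - ρ)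
  have hX : ConvexOn ℝ univ fun r : ℝ => lamX * (1 + mX) ^ (θ * r) := by
    simpa using (convexOn_rpow_affine (by linarith : (0 : ℝ) < 1 + mX) θ 0).smul hlamX
  have hI : ConvexOn ℝ univ fun r : ℝ => lamI * (1 + mI) ^ (1 - r) := by
    simpa [neg_add_eq_sub] using
      (convexOn_rpow_affine (by linarith : (0 : ℝ) < 1 + mI) (-1) 1).smul hlamI
  unfold characteristicFn
  exact (hQ.add hX).add hI

theorem le_of_characteristicFn_nonpos_of_nonneg (hlamX : 0 ≤ lamX) (hmX : -1 < mX)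
    (hlamI : 0 ≤ lamI) (hmI : -1 < mI) (hρ : μI < ρ) {σX s r : ℝ}
    (hs : characteristicFn θ ρ μX lamX mX μI σI lamI mI σX s ≤ 0) (hr : 0 < r)
    (hr' : 0 ≤ characteristicFn θ ρ μX lamX mX μI σI lamI mI σX r) : s ≤ r :=
  (convexOn_characteristicFn hlamX hmX hlamI hmI σX).le_of_apply_nonpos_of_apply_nonneg
    (by rw [characteristicFn_zero]; linarith) hs hr hr'

theorem one_lt_of_characteristicFn_eq_zero (hlamX : 0 ≤ lamX) (hmX : -1 < mX)
    (hlamI : 0 ≤ lamI) (hmI : -1 < mI) (hρ : μI < ρ) {σX r : ℝ}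
    (hh : 0 < effectiveDiscount θ ρ μX lamX mX σX) (hr : 0 < r)
    (hroot : characteristicFn θ ρ μX lamX mX μI σI lamI mI σX r = 0) : 1 < r := by
  have hone : characteristicFn θ ρ μX lamX mX μI σI lamI mI σX 1 < 0 := by
    rw [characteristicFn_one]
    linarith
  refine lt_of_le_of_ne ?_ (by rintro rfl; linarith)
  exact le_of_characteristicFn_nonpos_of_nonneg hlamX hmX hlamI hmI hρ hone.le hr hroot.ge

end InvestmentModel

theorem threshold_increasing_in_sigmaX_general (θ ρ μX lamX mX μI σI lamI mI n κ0 κ1 : ℝ)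
    (hθ : 0 < θ) (hθ1 : θ ≤ 1) (hlamX : 0 ≤ lamX) (hmX : -1 < mX)
    (hlamI : 0 ≤ lamI) (hmI : -1 < mI)
    (hn : 0 ≤ n) (hκ : κ0 < κ1)
    (hρ : μI < ρ)
    (σX' σX'' : ℝ) (hσX' : 0 < σX') (hσ : σX' < σX'')
    (h' h'' A' A'' : ℝ)
    (hh' : h' = ρ - (μX + (θ - 1) * σX' ^ 2 / 2 - lamX * mX) * θ
      - lamX * ((1 + mX) ^ θ - 1))
    (hh'' : h'' = ρ - (μX + (θ - 1) * σX'' ^ 2 / 2 - lamX * mX) * θ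
      - lamX * ((1 + mX) ^ θ - 1))
    (hh'pos : 0 < h')
    (hA' : A' = Real.exp (-(h' * n)) / h')
    (hA'' : A'' = Real.exp (-(h'' * n)) / h'')
    (j' j'' : ℝ → ℝ)
    (hj' : ∀ r : ℝ, j' r = ((θ ^ 2 * σX' ^ 2 + σI ^ 2) / 2) * r ^ 2
      + ((μX - σX' ^ 2 / 2 - lamX * mX) * θ - (μI + σI ^ 2 / 2 - lamI * mI)) * r
      + ((μI - lamI * mI) - (lamX + lamI) - ρ)
      + lamX * (1 + mX) ^ (θ * r) + lamI * (1 + mI) ^ (1 - r))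
    (hj'' : ∀ r : ℝ, j'' r = ((θ ^ 2 * σX'' ^ 2 + σI ^ 2) / 2) * r ^ 2
      + ((μX - σX'' ^ 2 / 2 - lamX * mX) * θ - (μI + σI ^ 2 / 2 - lamI * mI)) * r
      + ((μI - lamI * mI) - (lamX + lamI) - ρ)
      + lamX * (1 + mX) ^ (θ * r) + lamI * (1 + mI) ^ (1 - r))
    (r0' r0'' : ℝ)
    (hr0' : 0 < r0' ∧ j' r0' = 0) (hr0'' : 0 < r0'' ∧ j'' r0'' = 0)
    (hθr : 1 ≤ θ * r0') :
    h' ≤ h'' ∧ 1 < r0' ∧ 1 < r0''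
    ∧ r0' / ((κ1 - κ0) * A' * (r0' - 1)) < r0'' / ((κ1 - κ0) * A'' * (r0'' - 1)) := by
  obtain rfl : j' = characteristicFn θ ρ μX lamX mX μI σI lamI mI σX' := funext hj'
  obtain rfl : j'' = characteristicFn θ ρ μX lamX mX μI σI lamI mI σX'' := funext hj''
  obtain rfl : h' = effectiveDiscount θ ρ μX lamX mX σX' := hh'
  obtain rfl : h'' = effectiveDiscount θ ρ μX lamX mX σX'' := hh''
  subst hA' hA''
  have hsq : σX' ^ 2 < σX'' ^ 2 := pow_lt_pow_left₀ hσ hσX'.le two_ne_zero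
  have hh : effectiveDiscount θ ρ μX lamX mX σX' ≤ effectiveDiscount θ ρ μX lamX mX σX'' :=
    effectiveDiscount_le_of_sq_le hθ.le hθ1 hsq.le
  have hh''pos := hh'pos.trans_le hh
  have hr1' := one_lt_of_characteristicFn_eq_zero hlamX hmX hlamI hmI hρ hh'pos hr0'.1 hr0'.2
  have hr1'' := one_lt_of_characteristicFn_eq_zero hlamX hmX hlamI hmI hρ hh''pos hr0''.1 hr0''.2
  have hroot : r0'' ≤ r0' := le_of_characteristicFn_nonpos_of_nonneg hlamX hmX hlamI hmI hρ
    hr0''.2.le hr0'.1 (characteristicFn_nonneg_of_eq_zero hsq.le hθr hr0'.2)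
  have hanti := strictAntiOn_exp_neg_mul_div hn
  refine ⟨hh, hr1', hr1'', investmentThreshold_lt_investmentThreshold (sub_pos.2 hκ)
    (div_pos (exp_pos _) hh''pos) (hanti.antitoneOn hh'pos hh''pos hh) hr1'' hroot ?_⟩
  rcases hθ1.lt_or_eq with hθlt | rfl
  · exact Or.inr (hanti hh'pos hh''pos (effectiveDiscount_lt_of_sq_lt hθ hθlt hsq))
  · refine Or.inl (hroot.lt_of_ne ?_)
    rintro rfl
    exact (characteristicFn_pos_of_eq_zero hsq (by linarith) hr0'.2).ne' hr0''.2

/-- For `1/r0 ≤ θ ≤ 1`, the investment threshold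
`q⋆ = r0/((κ1-κ0) A (r0-1))` is strictly increasing in the demand volatility `σX`. -/
theorem threshold_increasing_in_sigmaX (θ ρ μX lamX mX μI σI lamI mI n κ0 κ1 : ℝ)
    (hθ : 0 < θ) (hθ1 : θ ≤ 1) (hlamX : 0 ≤ lamX) (hmX : -1 < mX)
    (hσI : 0 < σI) (hlamI : 0 ≤ lamI) (hmI : -1 < mI)
    (hn : 0 ≤ n) (hκ0 : 0 < κ0) (hκ : κ0 < κ1)
    (hρ : μI < ρ)
    (σX' σX'' : ℝ) (hσX' : 0 < σX') (hσ : σX' < σX'')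
    (h' h'' A' A'' : ℝ)
    (hh' : h' = ρ - (μX + (θ - 1) * σX' ^ 2 / 2 - lamX * mX) * θ
      - lamX * ((1 + mX) ^ θ - 1))
    (hh'' : h'' = ρ - (μX + (θ - 1) * σX'' ^ 2 / 2 - lamX * mX) * θ
      - lamX * ((1 + mX) ^ θ - 1))
    (hh'pos : 0 < h')
    (hA' : A' = Real.exp (-(h' * n)) / h')
    (hA'' : A'' = Real.exp (-(h'' * n)) / h'')
    (j' j'' : ℝ → ℝ)
    (hj' : ∀ r : ℝ, j' r = ((θ ^ 2 * σX' ^ 2 + σI ^ 2) / 2) * r ^ 2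
      + ((μX - σX' ^ 2 / 2 - lamX * mX) * θ - (μI + σI ^ 2 / 2 - lamI * mI)) * r
      + ((μI - lamI * mI) - (lamX + lamI) - ρ)
      + lamX * (1 + mX) ^ (θ * r) + lamI * (1 + mI) ^ (1 - r))
    (hj'' : ∀ r : ℝ, j'' r = ((θ ^ 2 * σX'' ^ 2 + σI ^ 2) / 2) * r ^ 2
      + ((μX - σX'' ^ 2 / 2 - lamX * mX) * θ - (μI + σI ^ 2 / 2 - lamI * mI)) * r
      + ((μI - lamI * mI) - (lamX + lamI) - ρ)
      + lamX * (1 + mX) ^ (θ * r) + lamI * (1 + mI) ^ (1 - r))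
    (r0' r0'' : ℝ)
    (hr0' : 0 < r0' ∧ j' r0' = 0) (hr0'' : 0 < r0'' ∧ j'' r0'' = 0)
    (hθr : 1 ≤ θ * r0') :
    h' ≤ h'' ∧ 1 < r0' ∧ 1 < r0''
    ∧ r0' / ((κ1 - κ0) * A' * (r0' - 1)) < r0'' / ((κ1 - κ0) * A'' * (r0'' - 1)) :=
  threshold_increasing_in_sigmaX_general θ ρ μX lamX mX μI σI lamI mI n κ0 κ1 hθ hθ1 hlamX hmX hlamI
    hmI hn hκ hρ σX' σX'' hσX' hσ h' h'' A' A'' hh' hh'' hh'pos hA' hA'' j' j'' hj' hj'' r0' r0''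
    hr0' hr0'' hθr
end

section
/- Assume 0 < θ ≤ 1 and λX > 0, and fix all parameters except the demand jump size. For a demand jump size m > −1 let h(m), j(·; m) be h and j computed with mX = m; assume ρ > μI. Let mX′ < mX″ be two jump sizes with h(mX′) > 0 and h(mX″) > 0, let r0(m) be the unique positive root of j(·; m) (then r0(m) > 1), set A(m) = e^(−h(m)·n)/h(m) and q⋆(m) = r0(m)/((κ1 − κ0)·A(m)·(r0(m) − 1)), and assume θ·r0(mX′) ≥ 1. Then the investment threshold is not monotone in mX: (a) if −1 < mX′ < mX″ ≤ 0 then q⋆(mX″) < q⋆(mX′); (b) if 0 ≤ mX′ < mX″ then q⋆(mX′) < q⋆(mX″). -/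
/-!
Write `κ(e, m) = (1 + m) ^ e - 1 - e * m` for the compensated contribution of a jump of relative
size `m` to the growth rate of `X ^ e`. The demand jump size enters the model only through
`j(r; m) = j(r; 0) + λX κ(θ r, m)` and `h(m) = h(0) - λX κ(θ, m)`.

For `e ≥ 1`, `κ(e, ·)` is convex with minimum `0` at `m = 0`; for `e ≤ 1` it is concave with
maximum `0` there. So moving `m` away from `0` increases `κ(θ r, m)` for `θ r ≥ 1` and decreases
`κ(θ, m)`. Each `j(·; m)` is convex with `j(0; m) = μI - ρ < 0` and `j(1; m) = -h(m) < 0`, hence its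
positive root `r0(m)` exceeds `1`, and raising `j` at a root lowers the root. Thus moving `m` away
from `0` lowers `r0` and raises `h`, and both raise `q⋆ = h e^{h n} r0 / ((κ1 - κ0) (r0 - 1))`.
The increase is strict through `h` when `θ < 1` and through `r0` when `θ = 1`.
-/

open Real Set

section Convex

variable {𝕜 E β : Type*} [AddCommGroup E] [AddCommGroup β] [LinearOrder β] [IsOrderedAddMonoid β]
  {s : Set E} {f : E → β} {a b c : E}

theorem ConvexOn.le_of_isMinOn_of_mem_segment [Semiring 𝕜] [PartialOrder 𝕜] [Module 𝕜 E]
    [Module 𝕜 β] [PosSMulStrictMono 𝕜 β] (hf : ConvexOn 𝕜 s f) (hmin : IsMinOn f s c)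
    (hc : c ∈ s) (hb : b ∈ s) (ha : a ∈ segment 𝕜 c b) : f a ≤ f b :=
  (hf.le_on_segment hc hb ha).trans (max_le (hmin hb) le_rfl)

theorem ConcaveOn.le_of_isMaxOn_of_mem_segment [Semiring 𝕜] [PartialOrder 𝕜] [Module 𝕜 E]
    [Module 𝕜 β] [PosSMulStrictMono 𝕜 β] (hf : ConcaveOn 𝕜 s f) (hmax : IsMaxOn f s c)
    (hc : c ∈ s) (hb : b ∈ s) (ha : a ∈ segment 𝕜 c b) : f b ≤ f a :=
  hf.dual.le_of_isMinOn_of_mem_segment hmax.dual hc hb ha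

theorem StrictConvexOn.lt_of_isMinOn_of_mem_segment [Field 𝕜] [LinearOrder 𝕜]
    [IsStrictOrderedRing 𝕜] [Module 𝕜 E] [Module 𝕜 β] [PosSMulStrictMono 𝕜 β]
    (hf : StrictConvexOn 𝕜 s f) (hmin : IsMinOn f s c) (hc : c ∈ s) (hb : b ∈ s)
    (ha : a ∈ segment 𝕜 c b) (hab : a ≠ b) : f a < f b := by
  by_cases hac : a = c
  · subst hac
    refine (hmin hb).lt_of_ne fun heq => hab (hf.eq_of_isMinOn hmin ?_ hc hb)
    exact fun x hx => heq ▸ hmin hx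
  · have hcb : c ≠ b := by
      rintro rfl
      exact hac (by simpa using ha)
    have := hf.lt_on_openSegment hc hb hcb
      (mem_openSegment_of_ne_left_right (Ne.symm hac) (Ne.symm hab) ha)
    exact (lt_max_iff.1 this).resolve_left (not_lt.2 (hmin (hf.1.segment_subset hc hb ha)))

theorem StrictConcaveOn.lt_of_isMaxOn_of_mem_segment [Field 𝕜] [LinearOrder 𝕜]
    [IsStrictOrderedRing 𝕜] [Module 𝕜 E] [Module 𝕜 β] [PosSMulStrictMono 𝕜 β]
    (hf : StrictConcaveOn 𝕜 s f) (hmax : IsMaxOn f s c) (hc : c ∈ s) (hb : b ∈ s)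
    (ha : a ∈ segment 𝕜 c b) (hab : a ≠ b) : f b < f a :=
  hf.dual.lt_of_isMinOn_of_mem_segment hmax.dual hc hb ha hab

end Convex

theorem ConvexOn.le_of_lt_of_apply_lt {s : Set ℝ} {f : ℝ → ℝ} {x u v : ℝ}
    (hf : ConvexOn ℝ s f) (hx : x ∈ s) (hv : v ∈ s) (hxu : x < u) (hfxu : f x < f u)
    (hfv : f v ≤ f u) : v ≤ u := by
  by_contra! huv
  exact hfv.not_gt (hf.lt_right_of_left_lt hx hv (Ioo_subset_openSegment ⟨hxu, huv⟩) hfxu)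

/-- Of two convex functions negative at `x`, the one that is larger at one of the two roots
has the smaller root. -/
theorem ConvexOn.root_le_root {φ ψ : ℝ → ℝ} {x u v w : ℝ} (hφ : ConvexOn ℝ univ φ)
    (hψ : ConvexOn ℝ univ ψ) (hxu : x < u) (hφx : φ x < 0) (hψx : ψ x < 0)
    (hφu : φ u = 0) (hψv : ψ v = 0) (hw : w = u ∨ w = v) (hle : φ w ≤ ψ w) : v ≤ u := by
  rcases hw with rfl | rfl
  · exact hψ.le_of_lt_of_apply_lt (mem_univ x) (mem_univ v) hxu (by linarith) (by linarith)
  · exact hφ.le_of_lt_of_apply_lt (mem_univ x) (mem_univ w) hxu (by linarith) (by linarith)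

theorem ConvexOn.one_lt_of_apply_eq_zero {f : ℝ → ℝ} {r : ℝ} (hf : ConvexOn ℝ univ f)
    (hf0 : f 0 < 0) (hf1 : f 1 < 0) (hr : 0 ≤ r) (hfr : f r = 0) : 1 < r := by
  by_contra! hr1
  have hseg : r ∈ segment ℝ 0 1 := by rw [segment_eq_Icc zero_le_one]; exact ⟨hr, hr1⟩
  linarith [hf.le_on_segment (mem_univ 0) (mem_univ 1) hseg, max_lt hf0 hf1]

theorem convexOn_mul_add (a b : ℝ) : ConvexOn ℝ univ fun x : ℝ => a * x + b :=
  ((LinearMap.mulLeft ℝ a).convexOn convex_univ).add_const b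

theorem concaveOn_mul_add (a b : ℝ) : ConcaveOn ℝ univ fun x : ℝ => a * x + b :=
  ((LinearMap.mulLeft ℝ a).concaveOn convex_univ).add_const b

theorem convexOn_quadratic_add_rpow_s19 {a b c kX kI x y e : ℝ} (ha : 0 ≤ a) (hkX : 0 ≤ kX)
    (hkI : 0 ≤ kI) (hx : 0 < x) (hy : 0 < y) :
    ConvexOn ℝ univ fun r : ℝ => a * r ^ 2 + b * r + c + kX * x ^ (e * r) + kI * y ^ (1 - r) := by
  have hq : ConvexOn ℝ univ fun r : ℝ => a * r ^ 2 := by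
    simpa only [smul_eq_mul] using (even_two.convexOn_pow (𝕜 := ℝ)).smul ha
  have hX : ConvexOn ℝ univ fun r : ℝ => kX * x ^ (e * r) := by
    simp_rw [rpow_mul hx.le]
    simpa only [smul_eq_mul] using (convexOn_rpow_left (rpow_pos_of_pos hx e)).smul hkX
  have hY : ConvexOn ℝ univ fun r : ℝ => kI * y ^ (1 - r) := by
    have h : ∀ r : ℝ, kI * y ^ (1 - r) = kI * y * y⁻¹ ^ r := fun r => by
      rw [rpow_sub hy, rpow_one, inv_rpow hy.le, div_eq_mul_inv, mul_assoc]
    simp_rw [h]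
    simpa only [smul_eq_mul] using
      (convexOn_rpow_left (inv_pos.2 hy)).smul (mul_nonneg hkI hy.le)
  exact (((hq.add (convexOn_mul_add b c)).add hX).add hY).congr fun r _ => by
    simp only [Pi.add_apply]; ring

theorem div_sub_one_strictAntiOn : StrictAntiOn (fun r : ℝ => r / (r - 1)) (Ioi 1) := by
  intro r (hr : 1 < r) r' (hr' : 1 < r') hrr'
  rw [div_lt_div_iff₀ (by linarith) (by linarith)]
  nlinarith

theorem mul_exp_mul_strictMonoOn {n : ℝ} (hn : 0 ≤ n) :
    StrictMonoOn (fun h : ℝ => h * exp (h * n)) (Ioi 0) := fun _ _ h' (hh' : 0 < h') hhh' =>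
  mul_lt_mul hhh' (exp_le_exp.2 (mul_le_mul_of_nonneg_right hhh'.le hn)) (exp_pos _) hh'.le

theorem threshold_lt_threshold {C n h₁ h₂ r₁ r₂ : ℝ} (hC : 0 < C) (hn : 0 ≤ n) (hh₁ : 0 < h₁)
    (hr₂ : 1 < r₂) (hh : h₁ ≤ h₂) (hr : r₂ ≤ r₁) (hlt : r₂ < r₁ ∨ h₁ < h₂) :
    r₁ / (C * (exp (-(h₁ * n)) / h₁) * (r₁ - 1))
      < r₂ / (C * (exp (-(h₂ * n)) / h₂) * (r₂ - 1)) := by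
  have hform : ∀ {h r : ℝ}, 0 < h → 1 < r →
      r / (C * (exp (-(h * n)) / h) * (r - 1)) = h * exp (h * n) * (r / (r - 1)) / C := by
    intro h r hh hr
    have : r - 1 ≠ 0 := by linarith
    rw [exp_neg]
    field_simp
  have hh₂ : 0 < h₂ := hh₁.trans_le hh
  have hr₁ : 1 < r₁ := hr₂.trans_le hr
  have hpos : 0 < r₁ / (r₁ - 1) := div_pos (by linarith) (by linarith)
  rw [hform hh₁ hr₁, hform hh₂ hr₂, div_lt_div_iff_of_pos_right hC]
  rcases hlt with hlt | hlt
  · exact mul_lt_mul' ((mul_exp_mul_strictMonoOn hn).monotoneOn hh₁ hh₂ hh)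
      (div_sub_one_strictAntiOn hr₂ hr₁ hlt) hpos.le (by positivity)
  · exact mul_lt_mul (mul_exp_mul_strictMonoOn hn hh₁ hh₂ hlt)
      (div_sub_one_strictAntiOn.antitoneOn hr₂ hr₁ hr) hpos (by positivity)

noncomputable def jumpCumulant (e m : ℝ) : ℝ := (1 + m) ^ e - 1 - e * m

namespace jumpCumulant

@[simp] theorem zero_right (e : ℝ) : jumpCumulant e 0 = 0 := by simp [jumpCumulant]

theorem eq_rpow_comp_add_affine (e m : ℝ) :
    jumpCumulant e m = ((fun x : ℝ => x ^ e) ∘ fun x => 1 + x) m + (-e * m + -1) := by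
  simp only [jumpCumulant, Function.comp_apply]
  ring

theorem convexOn {e : ℝ} (he : 1 ≤ e) : ConvexOn ℝ (Ici (-1)) (jumpCumulant e) := by
  have hpow := (convexOn_rpow he).translate_right 1
  rw [preimage_const_add_Ici, zero_sub] at hpow
  exact (hpow.add ((convexOn_mul_add (-e) (-1)).subset (subset_univ _) (convex_Ici _))).congr
    fun m _ => (eq_rpow_comp_add_affine e m).symm

theorem strictConvexOn {e : ℝ} (he : 1 < e) : StrictConvexOn ℝ (Ici (-1)) (jumpCumulant e) := by
  have hpow := (strictConvexOn_rpow he).translate_right 1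
  rw [preimage_const_add_Ici, zero_sub] at hpow
  exact (hpow.add_convexOn ((convexOn_mul_add (-e) (-1)).subset (subset_univ _)
    (convex_Ici _))).congr fun m _ => (eq_rpow_comp_add_affine e m).symm

theorem concaveOn {e : ℝ} (he₀ : 0 ≤ e) (he₁ : e ≤ 1) :
    ConcaveOn ℝ (Ici (-1)) (jumpCumulant e) := by
  have hpow := (Real.concaveOn_rpow he₀ he₁).translate_right 1
  rw [preimage_const_add_Ici, zero_sub] at hpow
  exact (hpow.add ((concaveOn_mul_add (-e) (-1)).subset (subset_univ _) (convex_Ici _))).congr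
    fun m _ => (eq_rpow_comp_add_affine e m).symm

theorem strictConcaveOn {e : ℝ} (he₀ : 0 < e) (he₁ : e < 1) :
    StrictConcaveOn ℝ (Ici (-1)) (jumpCumulant e) := by
  have hpow := (Real.strictConcaveOn_rpow he₀ he₁).translate_right 1
  rw [preimage_const_add_Ici, zero_sub] at hpow
  exact (hpow.add_concaveOn ((concaveOn_mul_add (-e) (-1)).subset (subset_univ _)
    (convex_Ici _))).congr fun m _ => (eq_rpow_comp_add_affine e m).symm

theorem isMinOn {e : ℝ} (he : 1 ≤ e) : IsMinOn (jumpCumulant e) (Ici (-1)) 0 :=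
  isMinOn_iff.2 fun m (hm : -1 ≤ m) => by
    rw [zero_right, jumpCumulant]
    linarith [one_add_mul_self_le_rpow_one_add hm he]

theorem isMaxOn {e : ℝ} (he₀ : 0 ≤ e) (he₁ : e ≤ 1) : IsMaxOn (jumpCumulant e) (Ici (-1)) 0 :=
  isMaxOn_iff.2 fun m (hm : -1 ≤ m) => by
    rw [zero_right, jumpCumulant]
    linarith [rpow_one_add_le_one_add_mul_self hm he₀ he₁]

end jumpCumulant

theorem threshold_lt_of_mem_segment {θ lam C n a b : ℝ} {j : ℝ → ℝ → ℝ} {h r : ℝ → ℝ}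
    (hθ : 0 < θ) (hθ1 : θ ≤ 1) (hlam : 0 < lam) (hC : 0 < C) (hn : 0 ≤ n)
    (hj : ∀ m s, j m s = j 0 s + lam * jumpCumulant (θ * s) m)
    (hh : ∀ m, h m = h 0 - lam * jumpCumulant θ m) (hj1 : ∀ m, j m 1 = -h m)
    (hja : ConvexOn ℝ univ (j a)) (hjb : ConvexOn ℝ univ (j b))
    (hb : -1 ≤ b) (hab : a ∈ segment ℝ 0 b) (hne : a ≠ b) (hha : 0 < h a)
    (hra : 1 < r a) (hrb : 1 < r b) (hjra : j a (r a) = 0) (hjrb : j b (r b) = 0)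
    (hθr : 1 ≤ θ * r a ∨ 1 ≤ θ * r b) :
    r a / (C * (exp (-(h a * n)) / h a) * (r a - 1))
      < r b / (C * (exp (-(h b * n)) / h b) * (r b - 1)) := by
  obtain ⟨w, hw, hθw⟩ : ∃ w, (w = r a ∨ w = r b) ∧ 1 ≤ θ * w :=
    hθr.elim (fun h => ⟨_, .inl rfl, h⟩) (fun h => ⟨_, .inr rfl, h⟩)
  have h0 : (0 : ℝ) ∈ Ici (-1) := by norm_num
  have hjab : ∀ s, j b s - j a s = lam * (jumpCumulant (θ * s) b - jumpCumulant (θ * s) a) :=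
    fun s => by rw [hj a, hj b]; ring
  have hhab : h b - h a = lam * (jumpCumulant θ a - jumpCumulant θ b) := by
    rw [hh a, hh b]; ring
  have hhle : h a ≤ h b := by
    have := (jumpCumulant.concaveOn hθ.le hθ1).le_of_isMaxOn_of_mem_segment
      (jumpCumulant.isMaxOn hθ.le hθ1) h0 hb hab
    nlinarith
  have hrle : r b ≤ r a := by
    have := (jumpCumulant.convexOn hθw).le_of_isMinOn_of_mem_segment
      (jumpCumulant.isMinOn hθw) h0 hb hab
    exact hja.root_le_root hjb hra (by rw [hj1]; linarith) (by rw [hj1]; linarith) hjra hjrb hw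
      (by nlinarith [hjab w])
  have hstrict : r b < r a ∨ h a < h b := by
    rcases hθ1.lt_or_eq with hθ1 | rfl
    · right
      have := (jumpCumulant.strictConcaveOn hθ hθ1).lt_of_isMaxOn_of_mem_segment
        (jumpCumulant.isMaxOn hθ.le hθ1.le) h0 hb hab hne
      nlinarith
    · -- for `θ = 1` the rate `h` does not depend on the jump size
      left
      refine hrle.lt_of_ne fun hrab => ?_
      have hw1 : 1 < 1 * w := by rcases hw with rfl | rfl <;> simpa
      have := (jumpCumulant.strictConvexOn hw1).lt_of_isMinOn_of_mem_segment
        (jumpCumulant.isMinOn hw1.le) h0 hb hab hne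
      obtain rfl : w = r a := hw.elim id (·.trans hrab)
      nlinarith [hjab (r a), hrab ▸ hjrb]
  exact threshold_lt_threshold hC hn hha hrb hhle hrle hstrict

theorem threshold_nonmonotone_in_mX_general (θ ρ μX σX lamX μI σI lamI mI n κ0 κ1 : ℝ)
    (hθ : 0 < θ) (hθ1 : θ ≤ 1) (hlamX : 0 < lamX)
    (hlamI : 0 ≤ lamI) (hmI : -1 < mI)
    (hn : 0 ≤ n) (hκ : κ0 < κ1)
    (hρ : μI < ρ)
    (h : ℝ → ℝ)
    (hh : ∀ m : ℝ, h m = ρ - (μX + (θ - 1) * σX ^ 2 / 2 - lamX * m) * θ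
      - lamX * ((1 + m) ^ θ - 1))
    (A : ℝ → ℝ)
    (hA : ∀ m : ℝ, A m = Real.exp (-(h m * n)) / h m)
    (jm : ℝ → ℝ → ℝ)
    (hjm : ∀ m r : ℝ, jm m r = ((θ ^ 2 * σX ^ 2 + σI ^ 2) / 2) * r ^ 2
      + ((μX - σX ^ 2 / 2 - lamX * m) * θ - (μI + σI ^ 2 / 2 - lamI * mI)) * r
      + ((μI - lamI * mI) - (lamX + lamI) - ρ)
      + lamX * (1 + m) ^ (θ * r) + lamI * (1 + mI) ^ (1 - r))
    (mX' mX'' : ℝ) (hmX' : -1 < mX') (hm : mX' < mX'')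
    (hhpos' : 0 < h mX') (hhpos'' : 0 < h mX'')
    (r0 : ℝ → ℝ)
    (hr0' : 0 < r0 mX' ∧ jm mX' (r0 mX') = 0)
    (hr0'' : 0 < r0 mX'' ∧ jm mX'' (r0 mX'') = 0)
    (hθr : 1 ≤ θ * r0 mX') :
    1 < r0 mX' ∧ 1 < r0 mX''
    ∧ (mX'' ≤ 0 →
        r0 mX'' / ((κ1 - κ0) * A mX'' * (r0 mX'' - 1))
          < r0 mX' / ((κ1 - κ0) * A mX' * (r0 mX' - 1)))
    ∧ (0 ≤ mX' →
        r0 mX' / ((κ1 - κ0) * A mX' * (r0 mX' - 1))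
          < r0 mX'' / ((κ1 - κ0) * A mX'' * (r0 mX'' - 1))) := by
  have hmX'' : -1 < mX'' := hmX'.trans hm
  have hconv : ∀ m, -1 < m → ConvexOn ℝ univ (jm m) := fun m hm =>
    funext (hjm m) ▸ convexOn_quadratic_add_rpow_s19 (by positivity) hlamX.le hlamI (by linarith)
      (by linarith)
  have hj : ∀ m r, jm m r = jm 0 r + lamX * jumpCumulant (θ * r) m := fun m r => by
    rw [hjm, hjm, jumpCumulant, add_zero, one_rpow]; ring
  have hhκ : ∀ m, h m = h 0 - lamX * jumpCumulant θ m := fun m => by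
    rw [hh, hh, jumpCumulant, add_zero, one_rpow]; ring
  have hj0 : ∀ m, jm m 0 = μI - ρ := fun m => by
    rw [hjm]; simp only [mul_zero, sub_zero, rpow_zero, rpow_one]; ring
  have hj1 : ∀ m, jm m 1 = -h m := fun m => by
    rw [hjm, hh]; simp only [mul_one, sub_self, rpow_zero]; ring
  have hr1 : ∀ m, -1 < m → 0 < h m → 0 < r0 m → jm m (r0 m) = 0 → 1 < r0 m :=
    fun m hm hhm hr hjr => (hconv m hm).one_lt_of_apply_eq_zero
      (by rw [hj0]; linarith) (by rw [hj1]; linarith) hr.le hjr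
  have hr' := hr1 _ hmX' hhpos' hr0'.1 hr0'.2
  have hr'' := hr1 _ hmX'' hhpos'' hr0''.1 hr0''.2
  refine ⟨hr', hr'', fun hm'' => ?_, fun hm' => ?_⟩ <;> rw [hA, hA]
  · have hseg : mX'' ∈ segment ℝ 0 mX' := by
      rw [segment_eq_uIcc, uIcc_of_ge (hm.trans_le hm'').le]; exact ⟨hm.le, hm''⟩
    exact threshold_lt_of_mem_segment hθ hθ1 hlamX (sub_pos.2 hκ) hn hj hhκ hj1
      (hconv _ hmX'') (hconv _ hmX') hmX'.le hseg hm.ne' hhpos'' hr'' hr' hr0''.2 hr0'.2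
      (.inr hθr)
  · have hseg : mX' ∈ segment ℝ 0 mX'' := by
      rw [segment_eq_Icc (hm'.trans hm.le)]; exact ⟨hm', hm.le⟩
    exact threshold_lt_of_mem_segment hθ hθ1 hlamX (sub_pos.2 hκ) hn hj hhκ hj1
      (hconv _ hmX') (hconv _ hmX'') hmX''.le hseg hm.ne hhpos' hr' hr'' hr0'.2 hr0''.2
      (.inl hθr)

/-- For `1/r0 ≤ θ ≤ 1` and `λX > 0`, the investment threshold
`q⋆(m) = r0(m)/((κ1-κ0) A(m) (r0(m)-1))` is not monotone in the demand jump size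
`mX = m`: it decreases on negative jump sizes and increases on positive ones. -/
theorem threshold_nonmonotone_in_mX (θ ρ μX σX lamX μI σI lamI mI n κ0 κ1 : ℝ)
    (hθ : 0 < θ) (hθ1 : θ ≤ 1) (hσX : 0 < σX) (hlamX : 0 < lamX)
    (hσI : 0 < σI) (hlamI : 0 ≤ lamI) (hmI : -1 < mI)
    (hn : 0 ≤ n) (hκ0 : 0 < κ0) (hκ : κ0 < κ1)
    (hρ : μI < ρ)
    (h : ℝ → ℝ)
    (hh : ∀ m : ℝ, h m = ρ - (μX + (θ - 1) * σX ^ 2 / 2 - lamX * m) * θ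
      - lamX * ((1 + m) ^ θ - 1))
    (A : ℝ → ℝ)
    (hA : ∀ m : ℝ, A m = Real.exp (-(h m * n)) / h m)
    (jm : ℝ → ℝ → ℝ)
    (hjm : ∀ m r : ℝ, jm m r = ((θ ^ 2 * σX ^ 2 + σI ^ 2) / 2) * r ^ 2
      + ((μX - σX ^ 2 / 2 - lamX * m) * θ - (μI + σI ^ 2 / 2 - lamI * mI)) * r
      + ((μI - lamI * mI) - (lamX + lamI) - ρ)
      + lamX * (1 + m) ^ (θ * r) + lamI * (1 + mI) ^ (1 - r))
    (mX' mX'' : ℝ) (hmX' : -1 < mX') (hm : mX' < mX'')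
    (hhpos' : 0 < h mX') (hhpos'' : 0 < h mX'')
    (r0 : ℝ → ℝ)
    (hr0' : 0 < r0 mX' ∧ jm mX' (r0 mX') = 0)
    (hr0'' : 0 < r0 mX'' ∧ jm mX'' (r0 mX'') = 0)
    (hθr : 1 ≤ θ * r0 mX') :
    1 < r0 mX' ∧ 1 < r0 mX''
    ∧ (mX'' ≤ 0 →
        r0 mX'' / ((κ1 - κ0) * A mX'' * (r0 mX'' - 1))
          < r0 mX' / ((κ1 - κ0) * A mX' * (r0 mX' - 1)))
    ∧ (0 ≤ mX' →
        r0 mX' / ((κ1 - κ0) * A mX' * (r0 mX' - 1))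
          < r0 mX'' / ((κ1 - κ0) * A mX'' * (r0 mX'' - 1))) :=
  threshold_nonmonotone_in_mX_general θ ρ μX σX lamX μI σI lamI mI n κ0 κ1 hθ hθ1 hlamX hlamI hmI hn
    hκ hρ h hh A hA jm hjm mX' mX'' hmX' hm hhpos' hhpos'' r0 hr0' hr0'' hθr
end
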